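/- arXiv:2306.16047 — 8 statements merged into one kernel-verified Lean document; each statement's English description precedes it below -/
import Mathlib

section
/- Let H be a real Hilbert space, let O ⊆ H be a nonempty convex open set, let f : O → ℝ be a lower semicontinuous convex function, and let β > 0. Then the following are equivalent: (i) f is Gâteaux differentiable on O and ∇f is β-Lipschitz continuous on O, i.e. ‖∇f(x) − ∇f(y)‖ ≤ β‖x − y‖ for all x, y ∈ O; (ii) the function x ↦ (β/2)‖x‖² − f(x) is convex on O; (iii) f is Gâteaux differentiable on O and ∇f is (1/β)-cocoercive on O, i.e. ⟨∇f(x) − ∇f(y), x − y⟩ ≥ (1/β)‖∇f(x) − ∇f(y)‖² for all x, y ∈ O. -/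
/-!
(i) ⇒ (ii): the line derivative of `x ↦ β / 2 * ‖x‖ ^ 2 - f x` is `β • x - ∇f x`, which is
monotone when `∇f` is `β`-Lipschitz, and a function with monotone derivative is convex.
(iii) ⇒ (i) is Cauchy–Schwarz.

(ii) ⇒ (iii): by Baire, the lower semicontinuous convex `f` is bounded above near some point,
hence continuous on `O`. So `f` and `β / 2 * ‖·‖ ^ 2 - f` have subgradients at every `x ∈ O`,
and these squeeze `f (x + v) - f x` between a linear form and the same linear form plus
`β / 2 * ‖v‖ ^ 2`: `f` is Fréchet differentiable, with
`f a + ⟪∇f a, b - a⟫ ≤ f b ≤ f a + ⟪∇f a, b - a⟫ + β / 2 * ‖b - a‖ ^ 2`.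
Adding these bounds at the four points `a`, `b`, `a + w`, `b - w` with `w = -(∇f a - ∇f b) / β`
gives cocoercivity as long as `a` and `b` are close compared to their distance to the boundary
of `O`. Finally, `(1 / β)`-cocoercivity of `∇f` says that `z ↦ z - (2 / β) • ∇f z` is
nonexpansive, a property that passes from short pieces of a segment to the whole segment.
-/

open scoped RealInnerProductSpace Gradient
open Filter Set Metric Topology Asymptotics Convex

section LineRestriction

variable {E : Type*} [AddCommGroup E] [Module ℝ E]

theorem HasLineDerivAt.hasDerivAt_lineMap {f : E → ℝ} {a b : E} {t f' : ℝ}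
    (h : HasLineDerivAt ℝ f f' (AffineMap.lineMap a b t) (b - a)) :
    HasDerivAt (f ∘ AffineMap.lineMap a b) f' t := by
  have hshift : f ∘ AffineMap.lineMap a b =
      fun s => f (AffineMap.lineMap a b t + (s - t) • (b - a)) := by
    funext s
    simp only [Function.comp, AffineMap.lineMap_apply_module']
    congr 1
    module
  rw [hshift]
  exact HasDerivAt.comp_sub_const t t (by rwa [sub_self])

theorem ConvexOn.add_le_of_hasLineDerivAt {s : Set E} {f : E → ℝ} (hf : ConvexOn ℝ s f)
    {x y : E} (hx : x ∈ s) (hy : y ∈ s) {f' : ℝ} (hf' : HasLineDerivAt ℝ f f' x (y - x)) :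
    f x + f' ≤ f y := by
  have hder : HasDerivAt (f ∘ AffineMap.lineMap x y) f' (0 : ℝ) :=
    HasLineDerivAt.hasDerivAt_lineMap (by rwa [AffineMap.lineMap_apply_zero])
  have := (hf.comp_affineMap (AffineMap.lineMap x y)).le_slope_of_hasDerivAt
    (by simpa) (by simpa) one_pos hder
  simp only [slope_def_field, Function.comp_apply, AffineMap.lineMap_apply_one,
    AffineMap.lineMap_apply_zero, sub_zero, div_one] at this
  linarith

end LineRestriction

theorem LowerSemicontinuousOn.exists_isBoundedUnder_le {X : Type*} [TopologicalSpace X]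
    [BaireSpace X] {s : Set X} {f : X → ℝ} (hf : LowerSemicontinuousOn f s) (hs : IsOpen s)
    (hne : s.Nonempty) : ∃ x ∈ s, (𝓝 x).IsBoundedUnder (· ≤ ·) f := by
  have := hs.baireSpace
  have := hne.to_subtype
  have hclosed (n : ℕ) : IsClosed (s.domRestrict f ⁻¹' Iic (n : ℝ)) :=
    (lowerSemicontinuous_restrict_iff.mpr hf).isClosed_preimage _
  have hcover : ⋃ n : ℕ, s.domRestrict f ⁻¹' Iic (n : ℝ) = univ :=
    eq_univ_of_forall fun y => mem_iUnion.mpr (exists_nat_ge (f y))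
  obtain ⟨n, y, hy⟩ := nonempty_interior_of_iUnion_of_closed hclosed hcover
  refine ⟨y, y.2, isBoundedUnder_of_eventually_le (a := (n : ℝ)) ?_⟩
  rw [← hs.isOpenEmbedding_subtypeVal.map_nhds_eq]
  exact eventually_map.mpr (mem_interior_iff_mem_nhds.mp hy)

theorem ConvexOn.continuousOn_of_lowerSemicontinuousOn {E : Type*} [NormedAddCommGroup E]
    [NormedSpace ℝ E] [CompleteSpace E] {s : Set E} {f : E → ℝ} (hs : IsOpen s)
    (hf : ConvexOn ℝ s f) (hlsc : LowerSemicontinuousOn f s) : ContinuousOn f s := by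
  rcases s.eq_empty_or_nonempty with rfl | hne
  · exact continuousOn_empty f
  exact ((hf.continuousOn_tfae hs hne).out 3 1).mp (hlsc.exists_isBoundedUnder_le hs hne)

theorem dist_le_mul_of_forall_mem_segment {E X : Type*} [NormedAddCommGroup E] [NormedSpace ℝ E]
    [PseudoMetricSpace X] {φ : E → X} {x y : E} {L δ : ℝ} (hδ : 0 < δ)
    (h : ∀ a ∈ [x -[ℝ] y], ∀ b ∈ [x -[ℝ] y], dist a b < δ → dist (φ a) (φ b) ≤ L * dist a b) :
    dist (φ x) (φ y) ≤ L * dist x y := by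
  obtain ⟨n, hn⟩ := exists_nat_gt (dist x y / δ)
  have hn0 : (0 : ℝ) < n := (div_nonneg dist_nonneg hδ.le).trans_lt hn
  set z : ℕ → E := fun i => AffineMap.lineMap x y ((i : ℝ) / n)
  have hz_mem : ∀ i ≤ n, z i ∈ [x -[ℝ] y] := fun i hi =>
    lineMap_mem_segment ℝ x y ⟨by positivity, div_le_one_of_le₀ (by exact_mod_cast hi) hn0.le⟩
  have hz_dist : ∀ i, dist (z i) (z (i + 1)) = dist x y / n := by
    intro i
    rw [dist_lineMap_lineMap, Real.dist_eq, Nat.cast_succ, ← sub_div, sub_add_cancel_left,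
      abs_div, abs_neg, abs_one, abs_of_pos hn0]
    ring
  have hstep : dist x y / n < δ := by rwa [div_lt_iff₀ hn0, mul_comm, ← div_lt_iff₀ hδ]
  calc dist (φ x) (φ y) = dist (φ (z 0)) (φ (z n)) := by simp [z, hn0.ne']
    _ ≤ ∑ i ∈ Finset.range n, dist (φ (z i)) (φ (z (i + 1))) :=
      dist_le_range_sum_dist (fun i => φ (z i)) n
    _ ≤ ∑ _i ∈ Finset.range n, L * (dist x y / n) := by
      refine Finset.sum_le_sum fun i hi => ?_
      have hi := Finset.mem_range.mp hi
      rw [← hz_dist i]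
      exact h _ (hz_mem i hi.le) _ (hz_mem (i + 1) hi) ((hz_dist i).trans_lt hstep)
    _ = L * dist x y := by
      rw [Finset.sum_const, Finset.card_range, nsmul_eq_mul]
      field_simp

section Normed

variable {E : Type*} [NormedAddCommGroup E] [NormedSpace ℝ E]

theorem ContinuousLinearMap.eq_zero_of_eventually_nonneg_add_sq {L : E →L[ℝ] ℝ} {C : ℝ}
    (h : ∀ᶠ v in 𝓝 0, 0 ≤ L v + C * ‖v‖ ^ 2) : L = 0 := by
  have hsq : HasFDerivAt (fun v : E => C * ‖v‖ ^ 2) (0 : E →L[ℝ] ℝ) 0 := by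
    rw [hasFDerivAt_iff_isLittleO_nhds_zero]
    simpa using (isLittleO_norm_pow_id one_lt_two).const_mul_left C
  have hmin : IsLocalMin (fun v => L v + C * ‖v‖ ^ 2) 0 := by
    filter_upwards [h] with v hv
    simpa using hv
  simpa using hmin.hasFDerivAt_eq_zero (L.hasFDerivAt.add hsq)

theorem hasFDerivAt_of_eventually_le_of_le_add_sq {f : E → ℝ} {x : E} {φ ψ : E →L[ℝ] ℝ}
    {C : ℝ} (h : ∀ᶠ v in 𝓝 0, φ v ≤ f (x + v) - f x ∧ f (x + v) - f x ≤ ψ v + C * ‖v‖ ^ 2) :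
    HasFDerivAt f φ x := by
  have hψ : ψ = φ := by
    rw [← sub_eq_zero]
    refine ContinuousLinearMap.eq_zero_of_eventually_nonneg_add_sq (C := C) ?_
    filter_upwards [h] with v hv
    simp only [sub_apply]
    linarith [hv.1, hv.2]
  subst hψ
  rw [hasFDerivAt_iff_isLittleO_nhds_zero]
  refine IsBigO.trans_isLittleO (g := fun v => ‖v‖ ^ 2) ?_ (isLittleO_norm_pow_id one_lt_two)
  refine IsBigO.of_bound C ?_
  filter_upwards [h] with v hv
  rw [Real.norm_eq_abs, abs_le, norm_pow, norm_norm]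
  constructor <;> nlinarith [hv.1, hv.2, sq_nonneg ‖v‖]

theorem ConvexOn.exists_subgradient {s : Set E} {f : E → ℝ} (hs : IsOpen s)
    (hf : ConvexOn ℝ s f) (hfc : ContinuousOn f s) {x : E} (hx : x ∈ s) :
    ∃ φ : E →L[ℝ] ℝ, ∀ y ∈ s, f x + φ (y - x) ≤ f y := by
  set A : Set (E × ℝ) := {p | p.1 ∈ s ∧ f p.1 < p.2}
  have hAopen : IsOpen A := by
    have hcont : ContinuousOn (fun p : E × ℝ => p.2 - f p.1) (Prod.fst ⁻¹' s) :=
      continuousOn_snd.sub (hfc.comp continuousOn_fst fun _ hp => hp)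
    convert hcont.isOpen_inter_preimage (hs.preimage continuous_fst)
      (isOpen_Ioi (a := (0 : ℝ))) using 1
    ext p
    simp [A, sub_pos]
  obtain ⟨Φ, hΦ⟩ := geometric_hahn_banach_open_point hf.convex_strict_epigraph hAopen
    (fun h : (x, f x) ∈ A => lt_irrefl _ h.2)
  set ℓ : E →L[ℝ] ℝ := Φ.comp (ContinuousLinearMap.inl ℝ E ℝ)
  set c := Φ (0, 1)
  have hΦ_apply : ∀ y r, Φ (y, r) = ℓ y + r * c := by
    intro y r
    rw [show (y, r) = (y, (0 : ℝ)) + r • ((0 : E), (1 : ℝ)) by simp, map_add, map_smul]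
    rfl
  have hc : c < 0 := by
    have := hΦ (x, f x + 1) ⟨hx, lt_add_one _⟩
    rw [hΦ_apply, hΦ_apply] at this
    linarith
  refine ⟨(-c)⁻¹ • ℓ, fun y hy => ?_⟩
  have hle : ℓ (y - x) ≤ (-c) * (f y - f x) := by
    refine le_of_forall_pos_lt_add fun ε hε => ?_
    have := hΦ (y, f y + ε / (-c)) ⟨hy, lt_add_of_pos_right _ (div_pos hε (neg_pos.mpr hc))⟩
    rw [hΦ_apply, hΦ_apply] at this
    rw [map_sub]
    have : ε / (-c) * c = -ε := by rw [div_neg, neg_mul, div_mul_cancel₀ _ hc.ne]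
    nlinarith
  have := (inv_mul_le_iff₀ (neg_pos.mpr hc)).mpr hle
  simp only [smul_apply, smul_eq_mul]
  linarith

end Normed

section Inner

variable {H : Type*} [NormedAddCommGroup H] [InnerProductSpace ℝ H]

theorem convexOn_of_inner_sub_nonneg {s : Set H} (hs : Convex ℝ s) (hso : IsOpen s)
    {f : H → ℝ} {g : H → H} (hf : ∀ x ∈ s, ∀ d, HasLineDerivAt ℝ f ⟪g x, d⟫ x d)
    (hg : ∀ x ∈ s, ∀ y ∈ s, 0 ≤ ⟪g x - g y, x - y⟫) : ConvexOn ℝ s f := by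
  refine ⟨hs, fun a ha b hb μ ν hμ hν hμν => ?_⟩
  set D := AffineMap.lineMap (k := ℝ) a b ⁻¹' s
  have hDo : IsOpen D := hso.preimage AffineMap.lineMap_continuous
  have hder : ∀ t ∈ D, HasDerivAt (f ∘ AffineMap.lineMap a b)
      ⟪g (AffineMap.lineMap a b t), b - a⟫ t :=
    fun t ht => (hf _ ht _).hasDerivAt_lineMap
  have hφ : ConvexOn ℝ D (f ∘ AffineMap.lineMap a b) := by
    refine MonotoneOn.convexOn_of_deriv (hs.affine_preimage _)
      (fun t ht => (hder t ht).continuousAt.continuousWithinAt) ?_ ?_ <;> rw [hDo.interior_eq]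
    · exact fun t ht => (hder t ht).differentiableAt.differentiableWithinAt
    intro t ht t' ht' htt'
    rw [(hder t ht).deriv, (hder t' ht').deriv, ← sub_nonneg, ← inner_sub_left]
    rcases htt'.eq_or_lt with rfl | hlt
    · simp
    have hmono := hg _ ht' _ ht
    have hdiff : AffineMap.lineMap a b t' - AffineMap.lineMap a b t = (t' - t) • (b - a) := by
      simp only [AffineMap.lineMap_apply_module']
      module
    rw [hdiff, real_inner_smul_right] at hmono
    exact nonneg_of_mul_nonneg_right hmono (sub_pos.mpr hlt)
  have hcomb : AffineMap.lineMap a b ν = μ • a + ν • b := by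
    rw [AffineMap.lineMap_apply_module, ← hμν, add_sub_cancel_right]
  have := hφ.2 (x := 0) (y := 1) (by simpa [D]) (by simpa [D]) hμ hν hμν
  simpa only [smul_eq_mul, mul_zero, mul_one, zero_add, Function.comp, AffineMap.lineMap_apply_zero,
    AffineMap.lineMap_apply_one, hcomb] using this

theorem HasLineDerivAt.half_mul_sq_norm_sub {f : H → ℝ} {x u d : H} (β : ℝ)
    (hf : HasLineDerivAt ℝ f ⟪u, d⟫ x d) :
    HasLineDerivAt ℝ (fun y => β / 2 * ‖y‖ ^ 2 - f y) ⟪β • x - u, d⟫ x d := by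
  have hsq : HasLineDerivAt ℝ (fun y => β / 2 * ‖y‖ ^ 2) (β * ⟪x, d⟫) x d := by
    convert ((hasStrictFDerivAt_norm_sq x).hasFDerivAt.const_mul (β / 2)).hasLineDerivAt d using 1
    simp only [smul_apply, innerSL_apply_apply, smul_eq_mul]
    ring
  rw [inner_sub_left, real_inner_smul_left]
  exact hsq.sub hf

theorem ConvexOn.differentiableAt_of_convexOn_half_mul_sq_norm_sub {s : Set H} {f : H → ℝ}
    {β : ℝ} (hs : IsOpen s) (hf : ConvexOn ℝ s f) (hfc : ContinuousOn f s)
    (hh : ConvexOn ℝ s fun x => β / 2 * ‖x‖ ^ 2 - f x) {x : H} (hx : x ∈ s) :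
    DifferentiableAt ℝ f x := by
  obtain ⟨φ, hφ⟩ := hf.exists_subgradient hs hfc hx
  obtain ⟨χ, hχ⟩ := hh.exists_subgradient hs
    ((continuous_const.mul (continuous_norm.pow 2)).continuousOn.sub hfc) hx
  refine HasFDerivAt.differentiableAt (f' := φ) <|
    hasFDerivAt_of_eventually_le_of_le_add_sq (ψ := β • innerSL ℝ x - χ) (C := β / 2) ?_
  have hnhds : ∀ᶠ v in 𝓝 (0 : H), x + v ∈ s :=
    (continuous_const_add x).continuousAt.preimage_mem_nhds (by simpa using hs.mem_nhds hx)
  filter_upwards [hnhds] with v hv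
  have hlow := hφ _ hv
  have hup := hχ _ hv
  rw [add_sub_cancel_left] at hlow hup
  have hsq := norm_add_sq_real x v
  refine ⟨by linarith, ?_⟩
  simp only [sub_apply, smul_apply, innerSL_apply_apply, smul_eq_mul]
  linear_combination hup + β / 2 * hsq

theorem one_div_mul_sq_le_inner_iff_norm_sub_le {β : ℝ} (hβ : 0 < β) (u v : H) :
    1 / β * ‖v‖ ^ 2 ≤ ⟪v, u⟫ ↔ ‖u - (2 / β) • v‖ ≤ ‖u‖ := by
  rw [← sq_le_sq₀ (norm_nonneg _) (norm_nonneg _), norm_sub_sq_real, norm_smul,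
    real_inner_smul_right, real_inner_comm, mul_pow, Real.norm_eq_abs, sq_abs]
  have hexp : ‖u‖ ^ 2 - 2 * (2 / β * ⟪u, v⟫) + (2 / β) ^ 2 * ‖v‖ ^ 2
      = ‖u‖ ^ 2 - 4 / β * (⟪u, v⟫ - 1 / β * ‖v‖ ^ 2) := by ring
  rw [hexp, sub_le_self_iff, ← sub_nonneg]
  exact (mul_nonneg_iff_of_pos_left (by positivity)).symm

theorem neg_two_mul_inner_le_of_le_of_le {s : Set H} {f : H → ℝ} {g : H → H} {β : ℝ}
    (hlow : ∀ a ∈ s, ∀ b ∈ s, f a + ⟪g a, b - a⟫ ≤ f b)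
    (hup : ∀ a ∈ s, ∀ b ∈ s, f b ≤ f a + ⟪g a, b - a⟫ + β / 2 * ‖b - a‖ ^ 2)
    {a b w : H} (ha : a ∈ s) (hb : b ∈ s) (haw : a + w ∈ s) (hbw : b - w ∈ s) :
    -2 * ⟪g a - g b, w⟫ ≤ ⟪g a - g b, a - b⟫ + β * ‖w‖ ^ 2 := by
  have h₁ := hlow a ha (b - w) hbw
  have h₂ := hlow b hb (a + w) haw
  have h₃ := hup a ha (a + w) haw
  have h₄ := hup b hb (b - w) hbw
  rw [add_sub_cancel_left] at h₃
  rw [sub_sub_cancel_left, norm_neg] at h₄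
  simp only [inner_sub_left, inner_sub_right, inner_add_right, inner_neg_right]
    at h₁ h₂ h₃ h₄ ⊢
  linarith

theorem one_div_mul_sq_le_inner_of_ball_subset {s : Set H} {f : H → ℝ} {g : H → H} {β : ℝ}
    (hβ : 0 < β) (hlow : ∀ a ∈ s, ∀ b ∈ s, f a + ⟪g a, b - a⟫ ≤ f b)
    (hup : ∀ a ∈ s, ∀ b ∈ s, f b ≤ f a + ⟪g a, b - a⟫ + β / 2 * ‖b - a‖ ^ 2)
    {a b : H} {δ : ℝ} (ha : ball a δ ⊆ s) (hb : ball b δ ⊆ s) (hab : dist a b < δ / 2) :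
    1 / β * ‖g a - g b‖ ^ 2 ≤ ⟪g a - g b, a - b⟫ := by
  set u := g a - g b
  have hδ : 0 < δ := by linarith [dist_nonneg (x := a) (y := b)]
  have hCS : ⟪u, a - b⟫ ≤ ‖u‖ * dist a b := dist_eq_norm a b ▸ real_inner_le_norm _ _
  have key : ∀ t : ℝ, 0 ≤ t → t * ‖u‖ < δ →
      2 * t * ‖u‖ ^ 2 ≤ ⟪u, a - b⟫ + β * t ^ 2 * ‖u‖ ^ 2 := by
    intro t ht htu
    have hw : ‖-t • u‖ = t * ‖u‖ := by rw [norm_smul, Real.norm_eq_abs, abs_neg, abs_of_nonneg ht]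
    have := neg_two_mul_inner_le_of_le_of_le hlow hup (w := -t • u) (ha (mem_ball_self hδ))
      (hb (mem_ball_self hδ)) (ha (by rwa [mem_ball, dist_eq_norm, add_sub_cancel_left, hw]))
      (hb (by rwa [mem_ball, dist_eq_norm, sub_sub_cancel_left, norm_neg, hw]))
    rw [hw, real_inner_smul_right, real_inner_self_eq_norm_sq] at this
    linarith
  -- ensures that the step `t = 1 / β` below stays inside the balls
  have hsmall : ‖u‖ < β * δ := by
    by_contra! hbig
    have hu : 0 < ‖u‖ := lt_of_lt_of_le (by positivity) hbig
    have := key (δ / (2 * ‖u‖)) (by positivity) (by field_simp; linarith)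
    field_simp at this
    nlinarith [mul_lt_mul_of_pos_left hab hu]
  have := key (1 / β) (by positivity) (by rwa [one_div, inv_mul_lt_iff₀ hβ])
  field_simp at this ⊢
  linarith

theorem one_div_mul_sq_le_inner_of_le_of_le {s : Set H} {f : H → ℝ} {g : H → H} {β : ℝ}
    (hs : IsOpen s) (hsc : Convex ℝ s) (hβ : 0 < β)
    (hlow : ∀ a ∈ s, ∀ b ∈ s, f a + ⟪g a, b - a⟫ ≤ f b)
    (hup : ∀ a ∈ s, ∀ b ∈ s, f b ≤ f a + ⟪g a, b - a⟫ + β / 2 * ‖b - a‖ ^ 2)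
    {x y : H} (hx : x ∈ s) (hy : y ∈ s) :
    1 / β * ‖g x - g y‖ ^ 2 ≤ ⟪g x - g y, x - y⟫ := by
  have hcpt : IsCompact [x -[ℝ] y] :=
    segment_eq_image_lineMap ℝ x y ▸ isCompact_Icc.image AffineMap.lineMap_continuous
  obtain ⟨δ, hδ, hthick⟩ := hcpt.exists_thickening_subset_open hs (hsc.segment_subset hx hy)
  set T : H → H := fun z => z - (2 / β) • g z
  have hT : ∀ a b, T a - T b = (a - b) - (2 / β) • (g a - g b) := fun a b => by
    simp only [T, smul_sub]
    abel
  have hTx : dist (T x) (T y) ≤ 1 * dist x y := by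
    refine dist_le_mul_of_forall_mem_segment (half_pos hδ) fun a ha b hb hab => ?_
    rw [one_mul, dist_eq_norm, dist_eq_norm, hT, ← one_div_mul_sq_le_inner_iff_norm_sub_le hβ]
    exact one_div_mul_sq_le_inner_of_ball_subset hβ hlow hup
      ((ball_subset_thickening ha δ).trans hthick) ((ball_subset_thickening hb δ).trans hthick) hab
  rwa [one_mul, dist_eq_norm, dist_eq_norm, hT, ← one_div_mul_sq_le_inner_iff_norm_sub_le hβ] at hTx

theorem norm_le_mul_of_one_div_mul_sq_le_inner {β : ℝ} (hβ : 0 < β) {u v : H}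
    (h : 1 / β * ‖v‖ ^ 2 ≤ ⟪v, u⟫) : ‖v‖ ≤ β * ‖u‖ := by
  have hsq : ‖v‖ * ‖v‖ ≤ ‖v‖ * (β * ‖u‖) := by
    have := h.trans (real_inner_le_norm v u)
    rw [div_mul_eq_mul_div, one_mul, div_le_iff₀ hβ] at this
    linarith
  rcases (norm_nonneg v).eq_or_lt with h0 | hpos
  · rw [← h0]
    positivity
  · exact le_of_mul_le_mul_left hsq hpos

theorem convexOn_half_mul_sq_norm_sub_of_lipschitz {s : Set H} {f : H → ℝ} {g : H → H} {β : ℝ}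
    (hs : Convex ℝ s) (hso : IsOpen s) (hf : ∀ x ∈ s, ∀ d, HasLineDerivAt ℝ f ⟪g x, d⟫ x d)
    (hg : ∀ x ∈ s, ∀ y ∈ s, ‖g x - g y‖ ≤ β * ‖x - y‖) :
    ConvexOn ℝ s fun x => β / 2 * ‖x‖ ^ 2 - f x := by
  refine convexOn_of_inner_sub_nonneg hs hso (fun x hx d => (hf x hx d).half_mul_sq_norm_sub β)
    fun x hx y hy => ?_
  rw [show β • x - g x - (β • y - g y) = β • (x - y) - (g x - g y) by module, inner_sub_left,
    real_inner_smul_left, real_inner_self_eq_norm_sq, sub_nonneg]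
  calc ⟪g x - g y, x - y⟫ ≤ ‖g x - g y‖ * ‖x - y‖ := real_inner_le_norm _ _
    _ ≤ β * ‖x - y‖ * ‖x - y‖ := mul_le_mul_of_nonneg_right (hg x hx y hy) (norm_nonneg _)
    _ = β * ‖x - y‖ ^ 2 := by ring

theorem ConvexOn.exists_cocoercive_gradient [CompleteSpace H] {s : Set H} {f : H → ℝ} {β : ℝ}
    (hs : IsOpen s) (hf : ConvexOn ℝ s f) (hlsc : LowerSemicontinuousOn f s) (hβ : 0 < β)
    (hh : ConvexOn ℝ s fun x => β / 2 * ‖x‖ ^ 2 - f x) :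
    ∃ g : H → H, (∀ x ∈ s, ∀ d, HasLineDerivAt ℝ f ⟪g x, d⟫ x d) ∧
      ∀ x ∈ s, ∀ y ∈ s, 1 / β * ‖g x - g y‖ ^ 2 ≤ ⟪g x - g y, x - y⟫ := by
  have hfc := hf.continuousOn_of_lowerSemicontinuousOn hs hlsc
  have hgrad : ∀ x ∈ s, ∀ d, HasLineDerivAt ℝ f ⟪∇ f x, d⟫ x d := fun x hx d =>
    (hf.differentiableAt_of_convexOn_half_mul_sq_norm_sub hs hfc hh hx).hasGradientAt
      |>.hasFDerivAt.hasLineDerivAt d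
  have hlow : ∀ a ∈ s, ∀ b ∈ s, f a + ⟪∇ f a, b - a⟫ ≤ f b := fun a ha b hb =>
    hf.add_le_of_hasLineDerivAt ha hb (hgrad a ha _)
  have hup : ∀ a ∈ s, ∀ b ∈ s, f b ≤ f a + ⟪∇ f a, b - a⟫ + β / 2 * ‖b - a‖ ^ 2 := by
    intro a ha b hb
    have := hh.add_le_of_hasLineDerivAt ha hb ((hgrad a ha _).half_mul_sq_norm_sub β)
    have hsq := norm_add_sq_real a (b - a)
    rw [add_sub_cancel] at hsq
    rw [inner_sub_left, real_inner_smul_left] at this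
    linear_combination this + β / 2 * hsq
  exact ⟨∇ f, hgrad, fun x hx y hy => one_div_mul_sq_le_inner_of_le_of_le hs hf.1 hβ hlow hup hx hy⟩

end Inner

theorem stmt0_general {H : Type*} [NormedAddCommGroup H] [InnerProductSpace ℝ H] [CompleteSpace H]
    (O : Set H) (hOconv : Convex ℝ O) (hOopen : IsOpen O)
    (f : H → ℝ) (hlsc : LowerSemicontinuousOn f O) (hconv : ConvexOn ℝ O f)
    (β : ℝ) (hβ : 0 < β) :
    ((∃ g : H → H,
        (∀ x ∈ O, ∀ d : H, HasLineDerivAt ℝ f ⟪g x, d⟫ x d) ∧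
        ∀ x ∈ O, ∀ y ∈ O, ‖g x - g y‖ ≤ β * ‖x - y‖) ↔
      ConvexOn ℝ O (fun x => β / 2 * ‖x‖ ^ 2 - f x)) ∧
    (ConvexOn ℝ O (fun x => β / 2 * ‖x‖ ^ 2 - f x) ↔
      (∃ g : H → H,
        (∀ x ∈ O, ∀ d : H, HasLineDerivAt ℝ f ⟪g x, d⟫ x d) ∧
        ∀ x ∈ O, ∀ y ∈ O, (1 / β) * ‖g x - g y‖ ^ 2 ≤ ⟪g x - g y, x - y⟫)) := by
  have lipschitz_of_cocoercive : ∀ g : H → H,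
      (∀ x ∈ O, ∀ y ∈ O, 1 / β * ‖g x - g y‖ ^ 2 ≤ ⟪g x - g y, x - y⟫) →
      ∀ x ∈ O, ∀ y ∈ O, ‖g x - g y‖ ≤ β * ‖x - y‖ := fun g hco x hx y hy =>
    norm_le_mul_of_one_div_mul_sq_le_inner hβ (hco x hx y hy)
  have cocoercive_of_convexOn := hconv.exists_cocoercive_gradient hOopen hlsc hβ
  refine ⟨⟨fun ⟨g, hg, hlip⟩ => ?_, fun hh => ?_⟩,
    ⟨cocoercive_of_convexOn, fun ⟨g, hg, hco⟩ => ?_⟩⟩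
  · exact convexOn_half_mul_sq_norm_sub_of_lipschitz hOconv hOopen hg hlip
  · obtain ⟨g, hg, hco⟩ := cocoercive_of_convexOn hh
    exact ⟨g, hg, lipschitz_of_cocoercive g hco⟩
  · exact convexOn_half_mul_sq_norm_sub_of_lipschitz hOconv hOopen hg
      (lipschitz_of_cocoercive g hco)

/-- **Baillon–Haddad theorem on a convex open set.**
Let `H` be a real Hilbert space, `O ⊆ H` a nonempty convex open set, `f` a lower
semicontinuous convex function on `O`, and `β > 0`.  The following are equivalent:
(i) `f` is Gâteaux differentiable on `O` with a `β`-Lipschitz gradient on `O`;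
(ii) `x ↦ (β/2)‖x‖² − f x` is convex on `O`;
(iii) `f` is Gâteaux differentiable on `O` with a `(1/β)`-cocoercive gradient on `O`. -/
theorem stmt0 {H : Type*} [NormedAddCommGroup H] [InnerProductSpace ℝ H] [CompleteSpace H]
    (O : Set H) (hOne : O.Nonempty) (hOconv : Convex ℝ O) (hOopen : IsOpen O)
    (f : H → ℝ) (hlsc : LowerSemicontinuousOn f O) (hconv : ConvexOn ℝ O f)
    (β : ℝ) (hβ : 0 < β) :
    ((∃ g : H → H,
        (∀ x ∈ O, ∀ d : H, HasLineDerivAt ℝ f ⟪g x, d⟫ x d) ∧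
        ∀ x ∈ O, ∀ y ∈ O, ‖g x - g y‖ ≤ β * ‖x - y‖) ↔
      ConvexOn ℝ O (fun x => β / 2 * ‖x‖ ^ 2 - f x)) ∧
    (ConvexOn ℝ O (fun x => β / 2 * ‖x‖ ^ 2 - f x) ↔
      (∃ g : H → H,
        (∀ x ∈ O, ∀ d : H, HasLineDerivAt ℝ f ⟪g x, d⟫ x d) ∧
        ∀ x ∈ O, ∀ y ∈ O, (1 / β) * ‖g x - g y‖ ^ 2 ≤ ⟪g x - g y, x - y⟫)) :=
  stmt0_general O hOconv hOopen f hlsc hconv β hβ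
end

section
/- Let H be a real Hilbert space, let φ : H → ℝ be convex and Gâteaux differentiable, let x ∈ H, M > 0, and let 0 ≤ μ ≤ L be such that μ‖y − z‖² ≤ ⟨y − z, ∇φ(y) − ∇φ(z)⟩ ≤ L‖y − z‖² for all y, z ∈ B_M(x). For μ' ∈ [0, μ] with μ' < L, define φ_{μ'} : u ↦ φ(u) − (μ'/2)‖u‖². Then ∇φ_{μ'} = ∇φ − μ'·Id is (1/(L − μ'))-cocoercive on B_M(x), i.e. for all y, z ∈ B_M(x): ⟨y − z, ∇φ_{μ'}(y) − ∇φ_{μ'}(z)⟩ ≥ (1/(L − μ'))‖∇φ_{μ'}(y) − ∇φ_{μ'}(z)‖². -/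
/-!
Subtracting `(μ'/2)‖·‖²` turns the hypothesis into `0 ≤ ⟪y - z, g y - g z⟫ ≤ ℓ‖y - z‖²` for
`g = ∇φ_{μ'}` and `ℓ = L - μ'`. Integrating along segments, these bounds give the first-order
lower and the quadratic upper bound for `φ_{μ'}` on the ball. Evaluating them at `p`, `q`,
`p - ℓ⁻¹(g p - g q)` and `q + ℓ⁻¹(g p - g q)` yields the Baillon–Haddad inequality
`‖g p - g q‖² ≤ ℓ⟪p - q, g p - g q⟫` whenever these four points lie in the ball. The same bounds
make `g` locally Lipschitz, so this is the case for neighbouring points of a fine subdivision of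
`[z, y]`, and Cauchy–Schwarz sums the local inequalities along the subdivision.
-/

open Finset
open scoped RealInnerProductSpace

section

variable {H : Type*} [NormedAddCommGroup H] [InnerProductSpace ℝ H] {f : H → ℝ} {g : H → H}

theorem hasDerivAt_apply_add_smul_of_hasLineDerivAt
    (hf : ∀ u d : H, HasLineDerivAt ℝ f ⟪g u, d⟫ u d) (a d : H) (t : ℝ) :
    HasDerivAt (fun s : ℝ => f (a + s • d)) ⟪g (a + t • d), d⟫ t := by
  have h : HasDerivAt (fun s : ℝ => f (a + t • d + (s - t) • d)) ⟪g (a + t • d), d⟫ t :=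
    HasDerivAt.comp_sub_const t t (by rw [sub_self]; exact hf (a + t • d) d)
  simpa only [sub_smul, add_add_sub_cancel] using h

theorem hasLineDerivAt_sub_half_mul_norm_sq (hf : ∀ u d : H, HasLineDerivAt ℝ f ⟪g u, d⟫ u d)
    (c : ℝ) (u d : H) :
    HasLineDerivAt ℝ (fun v => f v - c / 2 * ‖v‖ ^ 2) ⟪g u - c • u, d⟫ u d := by
  have hsq : HasLineDerivAt ℝ (fun v : H => ‖v‖ ^ 2) (2 * ⟪u, d⟫) u d := by
    simpa using (hasStrictFDerivAt_norm_sq u).hasFDerivAt.hasLineDerivAt d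
  have hderiv : ⟪g u - c • u, d⟫ = ⟪g u, d⟫ - c / 2 * (2 * ⟪u, d⟫) := by
    rw [inner_sub_left, real_inner_smul_left]
    ring
  rw [hderiv]
  exact (hf u d).sub (hsq.const_mul (c / 2))

theorem quadratic_lower_bound_of_forall_inner_ge
    (hf : ∀ u d : H, HasLineDerivAt ℝ f ⟪g u, d⟫ u d) {S : Set H} (hS : Convex ℝ S) {c : ℝ}
    (hc : ∀ y ∈ S, ∀ z ∈ S, c * ‖y - z‖ ^ 2 ≤ ⟪y - z, g y - g z⟫)
    {a b : H} (ha : a ∈ S) (hb : b ∈ S) :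
    f a + ⟪g a, b - a⟫ + c / 2 * ‖b - a‖ ^ 2 ≤ f b := by
  set d := b - a
  set G : ℝ → ℝ := fun s => f (a + s • d) - s * ⟪g a, d⟫ - s ^ 2 * (c / 2 * ‖d‖ ^ 2)
  have hG : ∀ s : ℝ, HasDerivAt G (⟪g (a + s • d), d⟫ - ⟪g a, d⟫ - s * (c * ‖d‖ ^ 2)) s :=
    fun s => (((hasDerivAt_apply_add_smul_of_hasLineDerivAt hf a d s).sub
      ((hasDerivAt_id' s).mul_const ⟪g a, d⟫)).sub
      ((hasDerivAt_pow 2 s).mul_const (c / 2 * ‖d‖ ^ 2))).congr_deriv (by norm_num; ring)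
  have hmono : MonotoneOn G (Set.Icc 0 1) := by
    refine monotoneOn_of_hasDerivWithinAt_nonneg (convex_Icc 0 1)
      (fun s _ => (hG s).continuousAt.continuousWithinAt)
      (fun s _ => (hG s).hasDerivWithinAt) fun s hs => ?_
    rw [interior_Icc] at hs
    have h := hc _ (hS.add_smul_sub_mem ha hb (Set.Ioo_subset_Icc_self hs)) a ha
    rw [add_sub_cancel_left, norm_smul, Real.norm_of_nonneg hs.1.le, real_inner_smul_left,
      real_inner_comm, inner_sub_left] at h
    nlinarith [hs.1]
  have h01 := hmono (Set.left_mem_Icc.2 zero_le_one) (Set.right_mem_Icc.2 zero_le_one)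
    zero_le_one
  simp only [G, zero_smul, add_zero, one_smul, add_sub_cancel, d] at h01
  linarith

theorem quadratic_upper_bound_of_forall_inner_le
    (hf : ∀ u d : H, HasLineDerivAt ℝ f ⟪g u, d⟫ u d) {S : Set H} (hS : Convex ℝ S) {L : ℝ}
    (hL : ∀ y ∈ S, ∀ z ∈ S, ⟪y - z, g y - g z⟫ ≤ L * ‖y - z‖ ^ 2)
    {a b : H} (ha : a ∈ S) (hb : b ∈ S) :
    f b ≤ f a + ⟪g a, b - a⟫ + L / 2 * ‖b - a‖ ^ 2 := by
  have hf' : ∀ u d : H, HasLineDerivAt ℝ (-f) ⟪-g u, d⟫ u d := fun u d => by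
    rw [inner_neg_left]
    exact (hf u d).neg
  have h := quadratic_lower_bound_of_forall_inner_ge (g := -g) hf' hS (c := -L)
    (fun y hy z hz => by
      simpa only [Pi.neg_apply, neg_sub_neg, ← neg_sub (g y), inner_neg_right, neg_mul,
        neg_le_neg_iff] using hL y hy z hz) ha hb
  simp only [Pi.neg_apply, inner_neg_left] at h
  linarith

theorem add_inner_le_of_forall_inner_nonneg
    (hf : ∀ u d : H, HasLineDerivAt ℝ f ⟪g u, d⟫ u d) {S : Set H} (hS : Convex ℝ S)
    (hmono : ∀ y ∈ S, ∀ z ∈ S, 0 ≤ ⟪y - z, g y - g z⟫) {a b : H} (ha : a ∈ S) (hb : b ∈ S) :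
    f a + ⟪g a, b - a⟫ ≤ f b := by
  simpa using quadratic_lower_bound_of_forall_inner_ge hf hS (c := 0) (by simpa using hmono) ha hb

section Cocoercive

variable (hf : ∀ u d : H, HasLineDerivAt ℝ f ⟪g u, d⟫ u d) {S : Set H} (hS : Convex ℝ S)
  (hmono : ∀ y ∈ S, ∀ z ∈ S, 0 ≤ ⟪y - z, g y - g z⟫) {ℓ : ℝ}
  (hℓ : ∀ y ∈ S, ∀ z ∈ S, ⟪y - z, g y - g z⟫ ≤ ℓ * ‖y - z‖ ^ 2)
include hf hS hmono hℓ

theorem norm_sub_le_two_mul_of_closedBall_subset (hℓ0 : 0 ≤ ℓ) {p q : H}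
    (hsub : Metric.closedBall p ‖p - q‖ ⊆ S) : ‖g p - g q‖ ≤ 2 * ℓ * ‖p - q‖ := by
  set r := ‖p - q‖
  set u := g p - g q
  rcases eq_or_ne u 0 with hu | hu
  · rw [hu, norm_zero]
    positivity
  have hr : 0 < r := norm_pos_iff.2 (sub_ne_zero.2 fun hpq => hu (by simp [u, hpq]))
  have hu' : 0 < ‖u‖ := norm_pos_iff.2 hu
  -- Compare the gradients at distance `r` from `p` in the direction of `u`.
  set e := (r / ‖u‖) • u
  have he : ‖e‖ = r := by
    rw [norm_smul, Real.norm_of_nonneg (by positivity), div_mul_cancel₀ _ hu'.ne']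
  have hue : ⟪u, e⟫ = r * ‖u‖ := by
    rw [real_inner_smul_right, real_inner_self_eq_norm_sq]
    field_simp
  have hp : p ∈ S := hsub (Metric.mem_closedBall_self hr.le)
  have hq : q ∈ S := hsub (by rw [Metric.mem_closedBall, dist_comm, dist_eq_norm])
  have hs : p + e ∈ S := hsub (by rw [Metric.mem_closedBall, dist_eq_norm, add_sub_cancel_left, he])
  have h1 := add_inner_le_of_forall_inner_nonneg hf hS hmono hp hs
  have h2 := add_inner_le_of_forall_inner_nonneg hf hS hmono hq hp
  have h3 := quadratic_upper_bound_of_forall_inner_le hf hS hℓ hq hs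
  have hse : ‖p - q + e‖ ^ 2 ≤ (2 * r) ^ 2 := by
    refine pow_le_pow_left₀ (norm_nonneg _) ?_ 2
    linarith [norm_add_le (p - q) e]
  rw [add_sub_cancel_left] at h1
  rw [add_sub_right_comm, inner_add_right] at h3
  rw [inner_sub_left] at hue
  have key : r * ‖u‖ ≤ r * (2 * ℓ * r) := by nlinarith
  exact le_of_mul_le_mul_left key hr

theorem norm_sub_sq_le_mul_inner_of_mem (hℓ0 : 0 < ℓ) {p q : H} (hp : p ∈ S) (hq : q ∈ S)
    (hp' : p - ℓ⁻¹ • (g p - g q) ∈ S) (hq' : q + ℓ⁻¹ • (g p - g q) ∈ S) :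
    ‖g p - g q‖ ^ 2 ≤ ℓ * ⟪p - q, g p - g q⟫ := by
  set v := g p - g q
  have h1 := add_inner_le_of_forall_inner_nonneg hf hS hmono hq hp'
  have h2 := quadratic_upper_bound_of_forall_inner_le hf hS hℓ hp hp'
  have h3 := add_inner_le_of_forall_inner_nonneg hf hS hmono hp hq'
  have h4 := quadratic_upper_bound_of_forall_inner_le hf hS hℓ hq hq'
  rw [sub_right_comm] at h1
  rw [sub_sub_cancel_left, norm_neg] at h2
  rw [add_sub_right_comm, ← neg_sub p q] at h3
  rw [add_sub_cancel_left] at h4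
  simp only [inner_sub_right, inner_add_right, inner_neg_right, real_inner_smul_right,
    norm_smul, Real.norm_of_nonneg (inv_nonneg.2 hℓ0.le)] at h1 h2 h3 h4
  have hv : ℓ⁻¹ * ‖v‖ ^ 2 = ℓ⁻¹ * ⟪g p, v⟫ - ℓ⁻¹ * ⟪g q, v⟫ := by
    rw [← mul_sub, ← inner_sub_left, real_inner_self_eq_norm_sq]
  have hpq : ⟪p - q, v⟫ = ⟪g p, p⟫ - ⟪g p, q⟫ - (⟪g q, p⟫ - ⟪g q, q⟫) := by
    rw [real_inner_comm, inner_sub_left, inner_sub_right, inner_sub_right]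
  have hsq : ℓ / 2 * (ℓ⁻¹ * ‖v‖) ^ 2 = ℓ⁻¹ * ‖v‖ ^ 2 / 2 := by
    field_simp
  have key : ℓ⁻¹ * ‖v‖ ^ 2 ≤ ⟪p - q, v⟫ := by linarith
  calc ‖v‖ ^ 2 = ℓ * (ℓ⁻¹ * ‖v‖ ^ 2) := by field_simp
    _ ≤ ℓ * ⟪p - q, v⟫ := mul_le_mul_of_nonneg_left key hℓ0.le

end Cocoercive

theorem norm_sum_sq_le_mul_inner_sum {ι : Type*} (s : Finset ι) (V : ι → H) (w : H) {ℓ : ℝ}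
    (h : ∀ i ∈ s, #s * ‖V i‖ ^ 2 ≤ ℓ * ⟪w, V i⟫) :
    ‖∑ i ∈ s, V i‖ ^ 2 ≤ ℓ * ⟪w, ∑ i ∈ s, V i⟫ :=
  calc ‖∑ i ∈ s, V i‖ ^ 2 ≤ (∑ i ∈ s, ‖V i‖) ^ 2 :=
        pow_le_pow_left₀ (norm_nonneg _) (norm_sum_le _ _) 2
    _ ≤ #s * ∑ i ∈ s, ‖V i‖ ^ 2 := sq_sum_le_card_mul_sum_sq
    _ ≤ ∑ i ∈ s, ℓ * ⟪w, V i⟫ := by rw [mul_sum]; exact sum_le_sum h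
    _ = ℓ * ⟪w, ∑ i ∈ s, V i⟫ := by rw [inner_sum, mul_sum]

section Ball

variable (hf : ∀ u d : H, HasLineDerivAt ℝ f ⟪g u, d⟫ u d) {x : H} {M : ℝ}
  (hmono : ∀ y ∈ Metric.ball x M, ∀ z ∈ Metric.ball x M, 0 ≤ ⟪y - z, g y - g z⟫) {ℓ : ℝ}
  (hℓ : ∀ y ∈ Metric.ball x M, ∀ z ∈ Metric.ball x M, ⟪y - z, g y - g z⟫ ≤ ℓ * ‖y - z‖ ^ 2)
  (hℓ0 : 0 < ℓ)
include hf hmono hℓ hℓ0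

theorem norm_sub_sq_le_mul_inner_of_mem_closedBall {m : ℝ} {p q : H}
    (hp : p ∈ Metric.closedBall x m) (hq : q ∈ Metric.closedBall x m)
    (hpq : m + 2 * ‖p - q‖ < M) : ‖g p - g q‖ ^ 2 ≤ ℓ * ⟪p - q, g p - g q⟫ := by
  rw [Metric.mem_closedBall, dist_eq_norm] at hp hq
  have hsub : Metric.closedBall p ‖p - q‖ ⊆ Metric.ball x M :=
    Metric.closedBall_subset_ball' (by rw [dist_eq_norm]; linarith [norm_nonneg (p - q)])
  have hv : ‖ℓ⁻¹ • (g p - g q)‖ ≤ 2 * ‖p - q‖ := by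
    rw [norm_smul, Real.norm_of_nonneg (inv_nonneg.2 hℓ0.le), inv_mul_le_iff₀ hℓ0, ← mul_assoc,
      mul_comm ℓ]
    exact norm_sub_le_two_mul_of_closedBall_subset hf (convex_ball x M) hmono hℓ hℓ0.le hsub
  have hball : ∀ a, ‖a - x‖ ≤ m → ‖(a - x) + ℓ⁻¹ • (g p - g q)‖ < M ∧
      ‖(a - x) - ℓ⁻¹ • (g p - g q)‖ < M := fun a ha =>
    ⟨by linarith [norm_add_le (a - x) (ℓ⁻¹ • (g p - g q))],
      by linarith [norm_sub_le (a - x) (ℓ⁻¹ • (g p - g q))]⟩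
  refine norm_sub_sq_le_mul_inner_of_mem hf (convex_ball x M) hmono hℓ hℓ0
    (by rw [Metric.mem_ball, dist_eq_norm]; linarith [norm_nonneg (p - q)])
    (by rw [Metric.mem_ball, dist_eq_norm]; linarith [norm_nonneg (p - q)]) ?_ ?_
  · rw [Metric.mem_ball, dist_eq_norm, sub_right_comm]
    exact (hball p hp).2
  · rw [Metric.mem_ball, dist_eq_norm, add_sub_right_comm]
    exact (hball q hq).1

theorem norm_sub_sq_le_mul_inner_of_mem_ball {y z : H} (hy : y ∈ Metric.ball x M)
    (hz : z ∈ Metric.ball x M) : ‖g y - g z‖ ^ 2 ≤ ℓ * ⟪y - z, g y - g z⟫ := by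
  set m := max (dist y x) (dist z x)
  have hmM : 0 < M - m := sub_pos.2 (max_lt hy hz)
  obtain ⟨n, hn⟩ := exists_nat_gt (2 * ‖y - z‖ / (M - m))
  have hn0 : (0 : ℝ) < n := lt_of_le_of_lt (by positivity) hn
  set X : ℕ → H := fun i => z + ((i : ℝ) / n) • (y - z)
  have hX : ∀ i ≤ n, X i ∈ Metric.closedBall x m := fun i hi =>
    (convex_closedBall x m).add_smul_sub_mem (Metric.mem_closedBall.2 (le_max_right _ _))
      (Metric.mem_closedBall.2 (le_max_left _ _))
      ⟨by positivity, div_le_one_of_le₀ (by exact_mod_cast hi) hn0.le⟩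
  have hstep : ∀ i, X (i + 1) - X i = (n : ℝ)⁻¹ • (y - z) := fun i => by
    simp only [X]
    push_cast
    module
  have hsmall : m + 2 * ‖(n : ℝ)⁻¹ • (y - z)‖ < M := by
    have hstep_lt : 2 * ‖y - z‖ / n < M - m := (div_lt_iff₀ hn0).2 (by
      rw [div_lt_iff₀ hmM] at hn
      linarith)
    calc m + 2 * ‖(n : ℝ)⁻¹ • (y - z)‖ = m + 2 * ‖y - z‖ / n := by
          rw [norm_smul, Real.norm_of_nonneg (inv_nonneg.2 hn0.le)]
          ring
      _ < M := by linarith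
  have hV : ∀ i ∈ range n, #(range n) * ‖g (X (i + 1)) - g (X i)‖ ^ 2 ≤
      ℓ * ⟪y - z, g (X (i + 1)) - g (X i)⟫ := by
    intro i hi
    rw [mem_range] at hi
    have h := norm_sub_sq_le_mul_inner_of_mem_closedBall hf hmono hℓ hℓ0 (hX (i + 1) hi)
      (hX i hi.le) (by rwa [hstep])
    rw [hstep, real_inner_smul_left] at h
    calc #(range n) * ‖g (X (i + 1)) - g (X i)‖ ^ 2
        ≤ n * (ℓ * ((n : ℝ)⁻¹ * ⟪y - z, g (X (i + 1)) - g (X i)⟫)) := by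
          rw [card_range]
          gcongr
      _ = ℓ * ⟪y - z, g (X (i + 1)) - g (X i)⟫ := by field_simp
  have h := norm_sum_sq_le_mul_inner_sum (range n) _ (y - z) hV
  have hX0 : X 0 = z := by simp [X]
  have hXn : X n = y := by simp [X, hn0.ne']
  rwa [sum_range_sub (fun i => g (X i)), hX0, hXn] at h

end Ball

end

theorem stmt6_general {H : Type*} [NormedAddCommGroup H] [InnerProductSpace ℝ H]
    (φ : H → ℝ)
    (φ' : H → H) (hφ' : ∀ u d : H, HasLineDerivAt ℝ φ ⟪φ' u, d⟫ u d)
    (x : H) (M : ℝ)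
    (μ L : ℝ)
    (hbound : ∀ y ∈ Metric.ball x M, ∀ z ∈ Metric.ball x M,
      μ * ‖y - z‖ ^ 2 ≤ ⟪y - z, φ' y - φ' z⟫ ∧ ⟪y - z, φ' y - φ' z⟫ ≤ L * ‖y - z‖ ^ 2)
    (μ' : ℝ) (hμ'μ : μ' ≤ μ) (hμ'L : μ' < L) :
    ∀ y ∈ Metric.ball x M, ∀ z ∈ Metric.ball x M,
      (1 / (L - μ')) * ‖(φ' y - μ' • y) - (φ' z - μ' • z)‖ ^ 2 ≤
        ⟪y - z, (φ' y - μ' • y) - (φ' z - μ' • z)⟫ := by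
  intro y hy z hz
  have hshift : ∀ a b : H, ⟪a - b, (φ' a - μ' • a) - (φ' b - μ' • b)⟫ =
      ⟪a - b, φ' a - φ' b⟫ - μ' * ‖a - b‖ ^ 2 := fun a b => by
    rw [sub_sub_sub_comm, ← smul_sub, inner_sub_right, real_inner_smul_right,
      real_inner_self_eq_norm_sq]
  have hmono : ∀ a ∈ Metric.ball x M, ∀ b ∈ Metric.ball x M,
      0 ≤ ⟪a - b, (φ' a - μ' • a) - (φ' b - μ' • b)⟫ := fun a ha b hb => by
    rw [hshift]
    linarith [(hbound a ha b hb).1, mul_le_mul_of_nonneg_right hμ'μ (sq_nonneg ‖a - b‖)]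
  have hlip : ∀ a ∈ Metric.ball x M, ∀ b ∈ Metric.ball x M,
      ⟪a - b, (φ' a - μ' • a) - (φ' b - μ' • b)⟫ ≤ (L - μ') * ‖a - b‖ ^ 2 := fun a ha b hb => by
    rw [hshift]
    linarith [(hbound a ha b hb).2]
  have hℓ0 : 0 < L - μ' := sub_pos.2 hμ'L
  rw [one_div, inv_mul_le_iff₀ hℓ0]
  exact norm_sub_sq_le_mul_inner_of_mem_ball (hasLineDerivAt_sub_half_mul_norm_sq hφ' μ')
    hmono hlip hℓ0 hy hz

/-- **Local cocoercivity of the shifted gradient.**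
Let `H` be a real Hilbert space, `φ : H → ℝ` convex Gâteaux differentiable with gradient
`φ'` satisfying `μ‖y − z‖² ≤ ⟪y − z, ∇φ(y) − ∇φ(z)⟫ ≤ L‖y − z‖²` on `B_M(x)`, with
`0 ≤ μ ≤ L`.  For `μ' ∈ [0, μ]` with `μ' < L`, the gradient of
`φ_{μ'} : u ↦ φ(u) − (μ'/2)‖u‖²`, i.e. `∇φ_{μ'} = ∇φ − μ'·Id`, is `(1/(L − μ'))`-cocoercive
on `B_M(x)`:
`⟪y − z, ∇φ_{μ'}(y) − ∇φ_{μ'}(z)⟫ ≥ (1/(L − μ'))‖∇φ_{μ'}(y) − ∇φ_{μ'}(z)‖²`. -/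
theorem stmt6 {H : Type*} [NormedAddCommGroup H] [InnerProductSpace ℝ H] [CompleteSpace H]
    (φ : H → ℝ) (hφconv : ConvexOn ℝ Set.univ φ)
    (φ' : H → H) (hφ' : ∀ u d : H, HasLineDerivAt ℝ φ ⟪φ' u, d⟫ u d)
    (x : H) (M : ℝ) (hM : 0 < M)
    (μ L : ℝ) (hμ0 : 0 ≤ μ) (hμL : μ ≤ L)
    (hbound : ∀ y ∈ Metric.ball x M, ∀ z ∈ Metric.ball x M,
      μ * ‖y - z‖ ^ 2 ≤ ⟪y - z, φ' y - φ' z⟫ ∧ ⟪y - z, φ' y - φ' z⟫ ≤ L * ‖y - z‖ ^ 2)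
    (μ' : ℝ) (hμ'0 : 0 ≤ μ') (hμ'μ : μ' ≤ μ) (hμ'L : μ' < L) :
    ∀ y ∈ Metric.ball x M, ∀ z ∈ Metric.ball x M,
      (1 / (L - μ')) * ‖(φ' y - μ' • y) - (φ' z - μ' • z)‖ ^ 2 ≤
        ⟪y - z, (φ' y - μ' • y) - (φ' z - μ' • z)⟫ :=
  stmt6_general φ φ' hφ' x M μ L hbound μ' hμ'μ hμ'L
end

section
/- Let H be a real Hilbert space, let ψ : H → (−∞, +∞] be proper lower semicontinuous convex, let φ : H → ℝ be convex Gâteaux differentiable, let x* be a minimizer of ψ + φ, let x₀ ∈ H, ε > 0, M₀ ≥ ‖x₀ − x*‖ + ε, and let L > 0 satisfy 0 ≤ ⟨y − z, ∇φ(y) − ∇φ(z)⟩ ≤ L‖y − z‖² for all y, z ∈ B_{M₀}(x*). Let γ ∈ (0, 2/L) and define x_{n+1} = prox_{γψ}(x_n − γ∇φ(x_n)) for n ∈ ℕ. Then: (a) x_n belongs to the closed ball of radius M₀ − ε centered at x* for every n ∈ ℕ and ‖x_{n+1} − x*‖ ≤ ‖x_n − x*‖; (b) the series Σ_n ‖∇φ(x_n)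 − ∇φ(x*)‖² converges; and (c) x_n − x_{n+1} → 0 strongly as n → ∞. -/
/-!
Near the minimizer the gradient is cocoercive,
`‖∇φ(y) − ∇φ(x*)‖² ≤ L ⟪y − x*, ∇φ(y) − ∇φ(x*)⟫` for `y` in the ball: this is the
Baillon–Haddad argument, run with the descent lemma on the ball only, which is possible because
the test points `x* + L⁻¹(∇φ(y) − ∇φ(x*))` and `y − L⁻¹(∇φ(y) − ∇φ(x*))` stay in the ball.
The proximal map of a convex function is firmly nonexpansive, and `x*` is a fixed point of the
forward–backward map. Together they give the Fejér inequality
`‖x_{n+1} − x*‖² + ‖x_n − x_{n+1} − γ(∇φ(x_n) − ∇φ(x*))‖² + γ(2/L − γ)‖∇φ(x_n) − ∇φ(x*)‖²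
  ≤ ‖x_n − x*‖²`
whenever `x_n` lies in the ball; by induction every iterate does, and telescoping the
inequality gives the summability and the vanishing of the steps.
-/

open scoped RealInnerProductSpace
open Filter Topology Set Metric

section LineDeriv

variable {E F : Type*} [AddCommGroup E] [Module ℝ E] [NormedAddCommGroup F] [NormedSpace ℝ F]

theorem HasLineDerivAt.hasDerivAt_comp_add_smul {f : E → F} {f' : F} {p d : E} {t : ℝ}
    (hf : HasLineDerivAt ℝ f f' (p + t • d) d) :
    HasDerivAt (fun s : ℝ => f (p + s • d)) f' t := by
  have h : HasDerivAt (fun s : ℝ => f (p + t • d + s • d)) f' (t - t) := by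
    rw [sub_self]; exact hf
  convert h.comp_sub_const t t using 3 with s
  rw [sub_smul]
  abel

theorem ConvexOn.add_le_of_hasLineDerivAt_s9 {s : Set E} {f : E → ℝ} (hf : ConvexOn ℝ s f)
    {p v : E} {D : ℝ} (hp : p ∈ s) (hpv : p + v ∈ s) (hD : HasLineDerivAt ℝ f D p v) :
    f p + D ≤ f (p + v) := by
  have hline := hf.comp_affineMap (AffineMap.lineMap p (p + v))
  have heq : f ∘ AffineMap.lineMap p (p + v) = fun t : ℝ => f (p + t • v) := by
    ext t; simp [AffineMap.lineMap_apply, add_comm]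
  rw [heq] at hline
  have := hline.le_slope_of_hasDerivAt (x := 0) (y := 1) (by simpa) (by simpa) one_pos hD
  simp only [slope_def_field, one_smul, zero_smul, add_zero, sub_zero, div_one] at this
  linarith

end LineDeriv

section Gradient

variable {H : Type*} [NormedAddCommGroup H] [InnerProductSpace ℝ H]
  {φ : H → ℝ} {φ' : H → H} {C : Set H} {xs : H} {M L : ℝ}

theorem ConvexOn.add_inner_le (hφ : ConvexOn ℝ C φ)
    (hφ' : ∀ u d : H, HasLineDerivAt ℝ φ ⟪φ' u, d⟫ u d) {p q : H} (hp : p ∈ C) (hq : q ∈ C) :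
    φ p + ⟪φ' p, q - p⟫ ≤ φ q := by
  simpa using hφ.add_le_of_hasLineDerivAt_s9 hp (by simpa) (hφ' p (q - p))

theorem Convex.le_add_inner_add_sq_norm (hC : Convex ℝ C)
    (hφ' : ∀ u d : H, HasLineDerivAt ℝ φ ⟪φ' u, d⟫ u d)
    (hL : ∀ y ∈ C, ∀ z ∈ C, ⟪y - z, φ' y - φ' z⟫ ≤ L * ‖y - z‖ ^ 2)
    {p q : H} (hp : p ∈ C) (hq : q ∈ C) :
    φ q ≤ φ p + ⟪φ' p, q - p⟫ + L / 2 * ‖q - p‖ ^ 2 := by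
  set d := q - p
  set η : ℝ → ℝ := fun t => φ (p + t • d) - t * ⟪φ' p, d⟫ - L / 2 * ‖d‖ ^ 2 * t ^ 2
  have hη : ∀ t, HasDerivAt η (⟪φ' (p + t • d), d⟫ - ⟪φ' p, d⟫ - L * ‖d‖ ^ 2 * t) t := by
    intro t
    exact ((((hφ' (p + t • d) d).hasDerivAt_comp_add_smul).sub
      (hasDerivAt_mul_const ⟪φ' p, d⟫)).sub
      ((hasDerivAt_pow 2 t).const_mul (L / 2 * ‖d‖ ^ 2))).congr_deriv (by push_cast; ring)
  have hanti : AntitoneOn η (Icc 0 1) := by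
    refine antitoneOn_of_hasDerivWithinAt_nonpos (convex_Icc 0 1)
      (fun t _ => (hη t).continuousAt.continuousWithinAt) (fun t _ => (hη t).hasDerivWithinAt)
      fun t ht => ?_
    rw [interior_Icc] at ht
    have hmem : p + t • d ∈ C := hC.add_smul_sub_mem hp hq ⟨ht.1.le, ht.2.le⟩
    have hbound := hL _ hmem p hp
    rw [add_sub_cancel_left, real_inner_smul_left, norm_smul, mul_pow, Real.norm_eq_abs,
      sq_abs, inner_sub_right] at hbound
    rw [real_inner_comm (φ' (p + t • d)) d, real_inner_comm (φ' p) d] at hbound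
    nlinarith [ht.1]
  have h01 := hanti (left_mem_Icc.2 zero_le_one) (right_mem_Icc.2 zero_le_one) zero_le_one
  simp only [η, zero_smul, add_zero, one_smul, d, add_sub_cancel] at h01
  linarith

theorem ConvexOn.inner_sub_le_of_mem (hφ : ConvexOn ℝ C φ)
    (hφ' : ∀ u d : H, HasLineDerivAt ℝ φ ⟪φ' u, d⟫ u d)
    (hL : ∀ y ∈ C, ∀ z ∈ C, ⟪y - z, φ' y - φ' z⟫ ≤ L * ‖y - z‖ ^ 2)
    {p q u : H} (hp : p ∈ C) (hq : q ∈ C) (hu : u ∈ C) :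
    ⟪φ' q - φ' p, u - p⟫ ≤ L / 2 * (‖u - p‖ ^ 2 + ‖q - p‖ ^ 2) := by
  have hqu := hφ.add_inner_le hφ' hq hu
  have hpu := hφ.1.le_add_inner_add_sq_norm hφ' hL hp hu
  have hqp := hφ.1.le_add_inner_add_sq_norm hφ' hL hq hp
  have hsplit : u - q = (u - p) + (p - q) := by abel
  rw [hsplit, inner_add_right] at hqu
  rw [inner_sub_left, norm_sub_rev q p]
  linarith

theorem ConvexOn.sq_norm_sub_div_le (hφ : ConvexOn ℝ C φ)
    (hφ' : ∀ u d : H, HasLineDerivAt ℝ φ ⟪φ' u, d⟫ u d)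
    (hL : ∀ y ∈ C, ∀ z ∈ C, ⟪y - z, φ' y - φ' z⟫ ≤ L * ‖y - z‖ ^ 2) (hL0 : 0 < L)
    {p q : H} (hp : p ∈ C) (hq : q ∈ C) (hw : q - L⁻¹ • (φ' q - φ' p) ∈ C) :
    ‖φ' q - φ' p‖ ^ 2 / (2 * L) ≤ φ q - φ p - ⟪φ' p, q - p⟫ := by
  set g := φ' q - φ' p
  have hpw := hφ.add_inner_le hφ' hp hw
  have hqw := hφ.1.le_add_inner_add_sq_norm hφ' hL hq hw
  rw [sub_sub_cancel_left, inner_neg_right, norm_neg, real_inner_smul_right, norm_smul,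
    Real.norm_eq_abs, abs_inv, abs_of_pos hL0, mul_pow] at hqw
  rw [sub_right_comm, inner_sub_right, real_inner_smul_right] at hpw
  have hgg : L⁻¹ * ⟪φ' q, g⟫ - L⁻¹ * ⟪φ' p, g⟫ = 2 * (‖g‖ ^ 2 / (2 * L)) := by
    rw [← mul_sub, ← inner_sub_left, real_inner_self_eq_norm_sq]
    field_simp
    rfl
  have hquad : L / 2 * ((L⁻¹) ^ 2 * ‖g‖ ^ 2) = ‖g‖ ^ 2 / (2 * L) := by field_simp
  linarith

theorem norm_sub_le_mul_of_mem_ball (hφ : ConvexOn ℝ (ball xs M) φ)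
    (hφ' : ∀ u d : H, HasLineDerivAt ℝ φ ⟪φ' u, d⟫ u d)
    (hL : ∀ y ∈ ball xs M, ∀ z ∈ ball xs M, ⟪y - z, φ' y - φ' z⟫ ≤ L * ‖y - z‖ ^ 2)
    (hL0 : 0 ≤ L) {y : H} (hy : y ∈ ball xs M) :
    ‖φ' y - φ' xs‖ ≤ L * ‖y - xs‖ := by
  set g := φ' y - φ' xs
  rcases eq_or_ne g 0 with hg | hg
  · rw [hg, norm_zero]; positivity
  set r := ‖y - xs‖
  have hr : 0 < r := norm_pos_iff.2 fun h => hg (by simp [g, sub_eq_zero.1 h])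
  have hgpos : 0 < ‖g‖ := norm_pos_iff.2 hg
  set u := xs + (r / ‖g‖) • g
  have hu : ‖u - xs‖ = r := by
    rw [add_sub_cancel_left, norm_smul, Real.norm_of_nonneg (by positivity), div_mul_cancel₀ _
      hgpos.ne']
  have hbound := hφ.inner_sub_le_of_mem hφ' hL
    (mem_ball_self (pos_of_mem_ball hy)) hy (by rwa [mem_ball_iff_norm, hu, ← mem_ball_iff_norm])
  rw [hu, add_sub_cancel_left, real_inner_smul_right, real_inner_self_eq_norm_sq] at hbound
  have : r * ‖g‖ ≤ r * (L * r) := by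
    calc r * ‖g‖ = r / ‖g‖ * ‖g‖ ^ 2 := by field_simp
      _ ≤ L / 2 * (r ^ 2 + r ^ 2) := hbound
      _ = r * (L * r) := by ring
  exact le_of_mul_le_mul_left this hr

theorem sq_norm_sub_le_mul_inner_of_mem_ball (hφ : ConvexOn ℝ (ball xs M) φ)
    (hφ' : ∀ u d : H, HasLineDerivAt ℝ φ ⟪φ' u, d⟫ u d)
    (hL : ∀ y ∈ ball xs M, ∀ z ∈ ball xs M, ⟪y - z, φ' y - φ' z⟫ ≤ L * ‖y - z‖ ^ 2)
    (hL0 : 0 < L) {y : H} (hy : y ∈ ball xs M) :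
    ‖φ' y - φ' xs‖ ^ 2 ≤ L * ⟪y - xs, φ' y - φ' xs⟫ := by
  set g := φ' y - φ' xs
  have hxs : xs ∈ ball xs M := mem_ball_self (pos_of_mem_ball hy)
  have hlip : L⁻¹ * ‖g‖ ≤ ‖y - xs‖ := by
    rw [inv_mul_le_iff₀ hL0]; exact norm_sub_le_mul_of_mem_ball hφ hφ' hL hL0.le hy
  have hinner : ⟪y - xs, g⟫ = ⟪φ' y, y - xs⟫ - ⟪φ' xs, y - xs⟫ := by
    rw [real_inner_comm, inner_sub_left]
  have hw₁ : xs - L⁻¹ • (φ' xs - φ' y) ∈ ball xs M := by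
    rw [mem_ball_iff_norm, sub_sub_cancel_left, norm_neg, norm_smul, norm_sub_rev,
      Real.norm_of_nonneg (inv_nonneg.2 hL0.le)]
    exact hlip.trans_lt (mem_ball_iff_norm.1 hy)
  have hhalf₁ := hφ.sq_norm_sub_div_le hφ' hL hL0 hy hxs hw₁
  rw [norm_sub_rev, ← neg_sub y xs, inner_neg_right] at hhalf₁
  have htangent := hφ.add_inner_le hφ' hxs hy
  have hco : L⁻¹ * ‖g‖ ^ 2 ≤ 2 * ⟪y - xs, g⟫ := by
    have : ‖g‖ ^ 2 / (2 * L) = L⁻¹ * ‖g‖ ^ 2 / 2 := by ring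
    linarith
  -- `hco`, half of the cocoercivity bound, is what keeps the second test point in the ball
  have hw₂ : y - L⁻¹ • g ∈ ball xs M := by
    have hsq : ‖y - L⁻¹ • g - xs‖ ^ 2 ≤ ‖y - xs‖ ^ 2 := by
      rw [sub_right_comm, norm_sub_sq_real, real_inner_smul_right, norm_smul,
        Real.norm_of_nonneg (inv_nonneg.2 hL0.le), mul_pow, sq L⁻¹, mul_assoc]
      linarith [mul_le_mul_of_nonneg_left hco (inv_nonneg.2 hL0.le)]
    rw [mem_ball_iff_norm]
    exact (pow_le_pow_iff_left₀ (norm_nonneg _) (norm_nonneg _) two_ne_zero).1 hsq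
      |>.trans_lt (mem_ball_iff_norm.1 hy)
  have hhalf₂ := hφ.sq_norm_sub_div_le hφ' hL hL0 hxs hy hw₂
  have hcoco : ‖g‖ ^ 2 / L ≤ ⟪y - xs, g⟫ := by
    have : ‖g‖ ^ 2 / L = 2 * (‖g‖ ^ 2 / (2 * L)) := by field_simp
    linarith
  rwa [div_le_iff₀' hL0] at hcoco

end Gradient

namespace EReal

theorem ne_top_of_mul_add_le {x y : EReal} {c r s : ℝ} (hc : 0 < c) (hy : y ≠ ⊤) (hy' : y ≠ ⊥)
    (h : (c : EReal) * x + r ≤ c * y + s) : x ≠ ⊤ := by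
  rintro rfl
  lift y to ℝ using ⟨hy, hy'⟩
  rw [coe_mul_top_of_pos hc, top_add_coe, top_le_iff] at h
  exact coe_ne_top _ (by exact_mod_cast h)

theorem mul_toReal_add_le {x y : EReal} {c r s : ℝ} (hx : x ≠ ⊤) (hx' : x ≠ ⊥) (hy : y ≠ ⊤)
    (hy' : y ≠ ⊥) (h : (c : EReal) * x + r ≤ c * y + s) : c * x.toReal + r ≤ c * y.toReal + s := by
  lift x to ℝ using ⟨hx, hx'⟩
  lift y to ℝ using ⟨hy, hy'⟩
  exact_mod_cast h

end EReal

section ERealConvex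

variable {E : Type*} [AddCommGroup E] [Module ℝ E] {ψ : E → EReal}

def ERealConvex (ψ : E → EReal) : Prop :=
  ∀ u v : E, ∀ a b : ℝ, 0 ≤ a → 0 ≤ b → a + b = 1 →
    ψ (a • u + b • v) ≤ (a : EReal) * ψ u + (b : EReal) * ψ v

theorem ERealConvex.le_coe {u v : E} (hψ : ERealConvex ψ) (hbot : ∀ u, ψ u ≠ ⊥) (hu : ψ u ≠ ⊤)
    (hv : ψ v ≠ ⊤) {a b : ℝ} (ha : 0 ≤ a) (hb : 0 ≤ b) (hab : a + b = 1) :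
    ψ (a • u + b • v) ≤ ((a * (ψ u).toReal + b * (ψ v).toReal : ℝ) : EReal) := by
  have h := hψ u v a b ha hb hab
  rwa [← EReal.coe_toReal hu (hbot u), ← EReal.coe_toReal hv (hbot v)] at h

theorem ERealConvex.mul_toReal_le_of_forall_le (hψ : ERealConvex ψ) (hbot : ∀ u, ψ u ≠ ⊥)
    {h : E → ℝ} {c D : ℝ} (hc : 0 < c) {p y : E} (hD : HasLineDerivAt ℝ h D p (y - p))
    (hmin : ∀ z, (c : EReal) * ψ p + h p ≤ c * ψ z + h z) (hy : ψ y ≠ ⊤) :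
    c * (ψ p).toReal ≤ c * (ψ y).toReal + D := by
  have hp : ψ p ≠ ⊤ := EReal.ne_top_of_mul_add_le hc hy (hbot y) (hmin y)
  suffices c * ((ψ p).toReal - (ψ y).toReal) ≤ D by linarith
  refine ge_of_tendsto hD.tendsto_slope_zero_right ?_
  filter_upwards [Ioo_mem_nhdsGT one_pos] with t ⟨ht0, ht1⟩
  have hz : p + t • (y - p) = (1 - t) • p + t • y := by module
  have hconv := hψ.le_coe hbot hp hy (sub_nonneg.2 ht1.le) ht0.le (sub_add_cancel 1 t)
  rw [← hz] at hconv
  have hzR := EReal.toReal_le_toReal hconv (hbot _) (EReal.coe_ne_top _)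
  have hmin' := EReal.mul_toReal_add_le hp (hbot p) (ne_top_of_le_ne_top (EReal.coe_ne_top _)
    hconv) (hbot _) (hmin (p + t • (y - p)))
  rw [EReal.toReal_coe] at hzR
  rw [smul_eq_mul, le_inv_mul_iff₀ ht0]
  linarith [mul_le_mul_of_nonneg_left hzR hc.le]

end ERealConvex

section Prox

variable {H : Type*} [NormedAddCommGroup H] [InnerProductSpace ℝ H]

def FirmlyNonexpansive (T : H → H) : Prop :=
  ∀ u v, ‖T u - T v‖ ^ 2 ≤ ⟪u - v, T u - T v⟫

theorem hasLineDerivAt_norm_sub_sq_div_two (u p v : H) :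
    HasLineDerivAt ℝ (fun z => ‖u - z‖ ^ 2 / 2) ⟪p - u, v⟫ p v := by
  have h : HasDerivAt (fun t : ℝ => u - (p + t • v)) (-v) 0 := by
    simpa using ((hasDerivAt_id (0 : ℝ)).smul_const v).const_add p |>.const_sub u
  have := h.norm_sq.div_const 2
  rw [zero_smul, add_zero, inner_neg_right] at this
  refine this.congr_deriv ?_
  rw [← neg_sub u p, inner_neg_left]
  ring

theorem firmlyNonexpansive_of_forall_add_inner_le {T : H → H} {f : H → ℝ} {S : Set H}
    (hTS : ∀ u, T u ∈ S) (hT : ∀ u, ∀ y ∈ S, f (T u) + ⟪u - T u, y - T u⟫ ≤ f y) :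
    FirmlyNonexpansive T := by
  intro u v
  have huv := hT u (T v) (hTS v)
  have hvu := hT v (T u) (hTS u)
  have hsplit : ⟪u - v, T u - T v⟫ - ‖T u - T v‖ ^ 2 =
      -⟪u - T u, T v - T u⟫ - ⟪v - T v, T u - T v⟫ := by
    rw [← real_inner_self_eq_norm_sq]
    simp only [inner_sub_left, inner_sub_right, real_inner_comm]
    ring
  linarith

theorem eq_of_forall_add_inner_le {T : H → H} {f : H → ℝ} {S : Set H}
    (hT : ∀ u, ∀ y ∈ S, f (T u) + ⟪u - T u, y - T u⟫ ≤ f y) (hTS : ∀ u, T u ∈ S) {x w : H}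
    (hx : x ∈ S) (hw : ∀ y ∈ S, f x ≤ f y + ⟪w, y - x⟫) : T (x - w) = x := by
  set p := T (x - w)
  have hp := hT (x - w) x hx
  have hxp := hw p (hTS _)
  have hsplit : ⟪x - w - p, x - p⟫ = ‖x - p‖ ^ 2 + ⟪w, p - x⟫ := by
    rw [sub_right_comm, inner_sub_left, real_inner_self_eq_norm_sq, ← neg_sub x p,
      inner_neg_right]
    ring
  have : ‖x - p‖ ^ 2 ≤ 0 := by linarith
  exact (sub_eq_zero.1 (norm_eq_zero.1 (pow_eq_zero_iff two_ne_zero |>.1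
    (le_antisymm this (sq_nonneg _))))).symm

theorem FirmlyNonexpansive.sq_norm_sub_add_le {T : H → H} (hT : FirmlyNonexpansive T) (u v : H) :
    ‖T u - T v‖ ^ 2 + ‖(u - v) - (T u - T v)‖ ^ 2 ≤ ‖u - v‖ ^ 2 := by
  rw [norm_sub_sq_real (u - v)]
  linarith [hT u v]

theorem FirmlyNonexpansive.forwardBackward_step {T G : H → H} (hT : FirmlyNonexpansive T)
    {xs y : H} {γ L : ℝ} (hγ : 0 < γ) (hL : 0 < L) (hfix : T (xs - γ • G xs) = xs)
    (hco : ‖G y - G xs‖ ^ 2 ≤ L * ⟪y - xs, G y - G xs⟫) :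
    ‖T (y - γ • G y) - xs‖ ^ 2 + (‖(y - T (y - γ • G y)) - γ • (G y - G xs)‖ ^ 2 +
      γ * (2 / L - γ) * ‖G y - G xs‖ ^ 2) ≤ ‖y - xs‖ ^ 2 := by
  have h := hT.sq_norm_sub_add_le (y - γ • G y) (xs - γ • G xs)
  have huv : y - γ • G y - (xs - γ • G xs) = (y - xs) - γ • (G y - G xs) := by module
  have hres : (y - xs) - γ • (G y - G xs) - (T (y - γ • G y) - xs) =
      (y - T (y - γ • G y)) - γ • (G y - G xs) := by abel
  rw [hfix, huv, hres, norm_sub_sq_real (y - xs), real_inner_smul_right, norm_smul,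
    Real.norm_of_nonneg hγ.le, mul_pow] at h
  have hco' : γ * (2 / L) * ‖G y - G xs‖ ^ 2 ≤ 2 * (γ * ⟪y - xs, G y - G xs⟫) := by
    calc γ * (2 / L) * ‖G y - G xs‖ ^ 2 = 2 * γ / L * ‖G y - G xs‖ ^ 2 := by ring
      _ ≤ 2 * γ / L * (L * ⟪y - xs, G y - G xs⟫) := by gcongr
      _ = 2 * (γ * ⟪y - xs, G y - G xs⟫) := by field_simp
  linarith

end Prox

section ProxOfConvex

variable {H : Type*} [NormedAddCommGroup H] [InnerProductSpace ℝ H] {ψ : H → EReal}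
  {prox : H → H} {γ : ℝ}

def IsProxMap (ψ : H → EReal) (γ : ℝ) (prox : H → H) : Prop :=
  ∀ u y : H, (γ : EReal) * ψ (prox u) + ((‖u - prox u‖ ^ 2 / 2 : ℝ) : EReal)
    ≤ (γ : EReal) * ψ y + ((‖u - y‖ ^ 2 / 2 : ℝ) : EReal)

theorem ERealConvex.mul_toReal_prox_add_inner_le (hψ : ERealConvex ψ) (hbot : ∀ u, ψ u ≠ ⊥)
    (hγ : 0 < γ) (hprox : IsProxMap ψ γ prox)
    (u : H) {y : H} (hy : ψ y ≠ ⊤) :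
    γ * (ψ (prox u)).toReal + ⟪u - prox u, y - prox u⟫ ≤ γ * (ψ y).toReal := by
  have := hψ.mul_toReal_le_of_forall_le hbot hγ
    (hasLineDerivAt_norm_sub_sq_div_two u (prox u) (y - prox u)) (hprox u) hy
  rw [← neg_sub u, inner_neg_left] at this
  linarith

theorem ERealConvex.firmlyNonexpansive_prox (hψ : ERealConvex ψ)
    (hproper : (∀ u, ψ u ≠ ⊥) ∧ ∃ u, ψ u ≠ ⊤) (hγ : 0 < γ)
    (hprox : IsProxMap ψ γ prox) :
    FirmlyNonexpansive prox := by
  obtain ⟨hbot, u₀, hu₀⟩ := hproper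
  exact firmlyNonexpansive_of_forall_add_inner_le (S := {y | ψ y ≠ ⊤})
    (f := fun y => γ * (ψ y).toReal)
    (fun u => EReal.ne_top_of_mul_add_le hγ hu₀ (hbot u₀) (hprox u u₀))
    fun u _ hy => hψ.mul_toReal_prox_add_inner_le hbot hγ hprox u hy

theorem ERealConvex.prox_sub_smul_eq (hψ : ERealConvex ψ)
    (hproper : (∀ u, ψ u ≠ ⊥) ∧ ∃ u, ψ u ≠ ⊤) (hγ : 0 < γ)
    (hprox : IsProxMap ψ γ prox)
    {φ : H → ℝ} {φ' : H → H} (hφ' : ∀ u d : H, HasLineDerivAt ℝ φ ⟪φ' u, d⟫ u d) {xs : H}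
    (hxs : ∀ y : H, ψ xs + (φ xs : EReal) ≤ ψ y + (φ y : EReal)) :
    prox (xs - γ • φ' xs) = xs := by
  obtain ⟨hbot, u₀, hu₀⟩ := hproper
  have hxs' : ∀ y, ((1 : ℝ) : EReal) * ψ xs + (φ xs : EReal) ≤ ((1 : ℝ) : EReal) * ψ y + φ y := by
    simpa using hxs
  refine eq_of_forall_add_inner_le (S := {y | ψ y ≠ ⊤}) (f := fun y => γ * (ψ y).toReal)
    (fun u _ hy => hψ.mul_toReal_prox_add_inner_le hbot hγ hprox u hy)
    (fun u => EReal.ne_top_of_mul_add_le hγ hu₀ (hbot u₀) (hprox u u₀))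
    (EReal.ne_top_of_mul_add_le one_pos hu₀ (hbot u₀) (hxs' u₀)) fun y hy => ?_
  have := hψ.mul_toReal_le_of_forall_le hbot one_pos (hφ' xs (y - xs)) hxs' hy
  rw [real_inner_smul_left]
  linarith [mul_le_mul_of_nonneg_left this hγ.le]

end ProxOfConvex

theorem summable_of_succ_add_le {a b : ℕ → ℝ} (ha : ∀ n, 0 ≤ a n) (hb : ∀ n, 0 ≤ b n)
    (h : ∀ n, a (n + 1) + b n ≤ a n) : Summable b := by
  refine summable_of_sum_range_le hb (c := a 0) fun n => ?_
  have htel : ∑ i ∈ Finset.range n, (a i - a (i + 1)) = a 0 - a n :=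
    Finset.sum_range_sub' a n
  linarith [Finset.sum_le_sum fun i (_ : i ∈ Finset.range n) => (by linarith [h i] :
    b i ≤ a i - a (i + 1)), ha n]

theorem antitone_of_succ_le_of_lt {a : ℕ → ℝ} {R : ℝ} (h0 : a 0 < R)
    (h : ∀ n, a n < R → a (n + 1) ≤ a n) : Antitone a := by
  have hle : ∀ n, a n ≤ a 0 := by
    intro n
    induction n with
    | zero => rfl
    | succ n ih => exact (h n (ih.trans_lt h0)).trans ih
  exact antitone_nat_of_succ_le fun n => h n ((hle n).trans_lt h0)

theorem tendsto_zero_of_summable_sq_norm {E : Type*} [SeminormedAddCommGroup E] {f : ℕ → E}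
    (hf : Summable fun n => ‖f n‖ ^ 2) : Tendsto f atTop (𝓝 0) := by
  rw [tendsto_zero_iff_norm_tendsto_zero]
  simpa using hf.tendsto_atTop_zero.sqrt

theorem stmt9_general {H : Type*} [NormedAddCommGroup H] [InnerProductSpace ℝ H]
    (ψ : H → EReal)
    (hψproper : (∀ u : H, ψ u ≠ ⊥) ∧ (∃ u : H, ψ u ≠ ⊤))
    (hψconv : ∀ u v : H, ∀ a b : ℝ, 0 ≤ a → 0 ≤ b → a + b = 1 →
      ψ (a • u + b • v) ≤ (a : EReal) * ψ u + (b : EReal) * ψ v)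
    (φ : H → ℝ) (hφconv : ConvexOn ℝ Set.univ φ)
    (φ' : H → H) (hφ' : ∀ u d : H, HasLineDerivAt ℝ φ ⟪φ' u, d⟫ u d)
    (xs : H) (hxs : ∀ y : H, ψ xs + (φ xs : EReal) ≤ ψ y + (φ y : EReal))
    (x₀ : H) (ε : ℝ) (hε : 0 < ε)
    (M₀ : ℝ) (hM₀ : ‖x₀ - xs‖ + ε ≤ M₀)
    (L : ℝ) (hL : 0 < L)
    (hbound : ∀ y ∈ Metric.ball xs M₀, ∀ z ∈ Metric.ball xs M₀,
      0 ≤ ⟪y - z, φ' y - φ' z⟫ ∧ ⟪y - z, φ' y - φ' z⟫ ≤ L * ‖y - z‖ ^ 2)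
    (γ : ℝ) (hγ0 : 0 < γ) (hγ2 : γ < 2 / L)
    (prox : ℝ → H → H)
    (hprox : ∀ γ' : ℝ, 0 < γ' → ∀ u y : H,
      (γ' : EReal) * ψ (prox γ' u) + ((‖u - prox γ' u‖ ^ 2 / 2 : ℝ) : EReal) ≤
        (γ' : EReal) * ψ y + ((‖u - y‖ ^ 2 / 2 : ℝ) : EReal))
    (x : ℕ → H) (hx0 : x 0 = x₀)
    (hxit : ∀ n : ℕ, x (n + 1) = prox γ (x n - γ • φ' (x n))) :
    ((∀ n : ℕ, x n ∈ Metric.closedBall xs (M₀ - ε)) ∧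
      ∀ n : ℕ, ‖x (n + 1) - xs‖ ≤ ‖x n - xs‖) ∧
    Summable (fun n : ℕ => ‖φ' (x n) - φ' xs‖ ^ 2) ∧
    Filter.Tendsto (fun n : ℕ => x n - x (n + 1)) Filter.atTop (nhds 0) := by
  have hfirm := ERealConvex.firmlyNonexpansive_prox hψconv hψproper hγ0 (hprox γ hγ0)
  have hfix := ERealConvex.prox_sub_smul_eq hψconv hψproper hγ0 (hprox γ hγ0) hφ' hxs
  set g := fun n => φ' (x n) - φ' xs
  set r := fun n => (x n - x (n + 1)) - γ • g n
  set c := γ * (2 / L - γ)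
  have hc : 0 < c := mul_pos hγ0 (by linarith)
  have hb : ∀ n, 0 ≤ ‖r n‖ ^ 2 + c * ‖g n‖ ^ 2 := fun n => by positivity
  have hstep : ∀ n, ‖x n - xs‖ < M₀ →
      ‖x (n + 1) - xs‖ ^ 2 + (‖r n‖ ^ 2 + c * ‖g n‖ ^ 2) ≤ ‖x n - xs‖ ^ 2 := fun n hn => by
    have h := hfirm.forwardBackward_step hγ0 hL hfix <| sq_norm_sub_le_mul_inner_of_mem_ball
      (hφconv.subset (subset_univ _) (convex_ball xs M₀)) hφ'
      (fun y hy z hz => (hbound y hy z hz).2) hL (mem_ball_iff_norm.2 hn)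
    rwa [← hxit n] at h
  have hanti : Antitone fun n => ‖x n - xs‖ :=
    antitone_of_succ_le_of_lt (R := M₀) (by rw [hx0]; linarith) fun n hn =>
      (pow_le_pow_iff_left₀ (norm_nonneg _) (norm_nonneg _) two_ne_zero).1
        (by linarith [hstep n hn, hb n])
  have hball : ∀ n, ‖x n - xs‖ ≤ M₀ - ε := fun n => by
    linarith [hanti n.zero_le, congrArg (‖· - xs‖) hx0]
  have hsum := summable_of_succ_add_le (fun n => sq_nonneg ‖x n - xs‖) hb
    fun n => hstep n (by linarith [hball n])
  have hgrad : Summable fun n => ‖g n‖ ^ 2 := (summable_mul_left_iff hc.ne').1 <|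
    hsum.of_nonneg_of_le (fun n => by positivity) fun n => le_add_of_nonneg_left (sq_nonneg _)
  have hres : Summable fun n => ‖r n‖ ^ 2 :=
    hsum.of_nonneg_of_le (fun n => sq_nonneg _) fun n => le_add_of_nonneg_right (by positivity)
  refine ⟨⟨fun n => mem_closedBall_iff_norm.2 (hball n), fun n => hanti n.le_succ⟩, hgrad, ?_⟩
  simpa [r] using (tendsto_zero_of_summable_sq_norm hres).add
    ((tendsto_zero_of_summable_sq_norm hgrad).const_smul γ)

/-- **Fejér-type estimates for the forward–backward iterates.**
Let `H` be a real Hilbert space, `ψ` proper lsc convex, `φ : H → ℝ` convex Gâteaux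
differentiable with gradient `φ'`, let `x*` minimize `ψ + φ`, `x₀ ∈ H`, `ε > 0`,
`M₀ ≥ ‖x₀ − x*‖ + ε`, and let `L > 0` satisfy
`0 ≤ ⟪y − z, ∇φ(y) − ∇φ(z)⟫ ≤ L‖y − z‖²` for all `y, z ∈ B_{M₀}(x*)`.
For `γ ∈ (0, 2/L)` and `x_{n+1} = prox_{γψ}(x_n − γ∇φ(x_n))`, `x 0 = x₀`:
(a) `x_n ∈ closedBall x* (M₀ − ε)` for all `n`, and `‖x_{n+1} − x*‖ ≤ ‖x_n − x*‖`;
(b) `Σ_n ‖∇φ(x_n) − ∇φ(x*)‖²` converges;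
(c) `x_n − x_{n+1} → 0` strongly. -/
theorem stmt9 {H : Type*} [NormedAddCommGroup H] [InnerProductSpace ℝ H] [CompleteSpace H]
    (ψ : H → EReal)
    (hψproper : (∀ u : H, ψ u ≠ ⊥) ∧ (∃ u : H, ψ u ≠ ⊤))
    (hψlsc : LowerSemicontinuous ψ)
    (hψconv : ∀ u v : H, ∀ a b : ℝ, 0 ≤ a → 0 ≤ b → a + b = 1 →
      ψ (a • u + b • v) ≤ (a : EReal) * ψ u + (b : EReal) * ψ v)
    (φ : H → ℝ) (hφconv : ConvexOn ℝ Set.univ φ)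
    (φ' : H → H) (hφ' : ∀ u d : H, HasLineDerivAt ℝ φ ⟪φ' u, d⟫ u d)
    (xs : H) (hxs : ∀ y : H, ψ xs + (φ xs : EReal) ≤ ψ y + (φ y : EReal))
    (x₀ : H) (ε : ℝ) (hε : 0 < ε)
    (M₀ : ℝ) (hM₀ : ‖x₀ - xs‖ + ε ≤ M₀)
    (L : ℝ) (hL : 0 < L)
    (hbound : ∀ y ∈ Metric.ball xs M₀, ∀ z ∈ Metric.ball xs M₀,
      0 ≤ ⟪y - z, φ' y - φ' z⟫ ∧ ⟪y - z, φ' y - φ' z⟫ ≤ L * ‖y - z‖ ^ 2)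
    (γ : ℝ) (hγ0 : 0 < γ) (hγ2 : γ < 2 / L)
    (prox : ℝ → H → H)
    (hprox : ∀ γ' : ℝ, 0 < γ' → ∀ u y : H,
      (γ' : EReal) * ψ (prox γ' u) + ((‖u - prox γ' u‖ ^ 2 / 2 : ℝ) : EReal) ≤
        (γ' : EReal) * ψ y + ((‖u - y‖ ^ 2 / 2 : ℝ) : EReal))
    (x : ℕ → H) (hx0 : x 0 = x₀)
    (hxit : ∀ n : ℕ, x (n + 1) = prox γ (x n - γ • φ' (x n))) :
    ((∀ n : ℕ, x n ∈ Metric.closedBall xs (M₀ - ε)) ∧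
      ∀ n : ℕ, ‖x (n + 1) - xs‖ ≤ ‖x n - xs‖) ∧
    Summable (fun n : ℕ => ‖φ' (x n) - φ' xs‖ ^ 2) ∧
    Filter.Tendsto (fun n : ℕ => x n - x (n + 1)) Filter.atTop (nhds 0) :=
  stmt9_general ψ hψproper hψconv φ hφconv φ' hφ' xs hxs x₀ ε hε M₀ hM₀ L hL hbound γ hγ0 hγ2 prox
    hprox x hx0 hxit
end

section
/- Let H be a real Hilbert space, let D ⊆ H be a nonempty closed convex bounded set, and let T : D → H be nonexpansive on D, i.e. ‖T y − T z‖ ≤ ‖y − z‖ for all y, z ∈ D. Let (x_n) be a sequence in D such that x_n converges weakly to some x and x_n − T x_n → 0 strongly. Then x ∈ D and T x = x. -/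
/-!
A closed convex set `D` contains the weak limit `p`: if `q` is the nearest point of `D` to `p`,
then `⟪p - q, x n - q⟫ ≤ 0` for all `n`, and in the limit `‖p - q‖² ≤ 0`.

For `T p = p`, expand `‖x n - T p‖² = ‖x n - p‖² + 2⟪x n - p, p - T p⟫ + ‖p - T p‖²` and compare
with `‖x n - T p‖ ≤ ‖x n - T (x n)‖ + ‖x n - p‖` from nonexpansiveness. Since `x n - T (x n) → 0`,
`x n - p` stays bounded in `D` and `⟪x n - p, p - T p⟫ → 0`, this forces `‖p - T p‖² ≤ 0`.
-/

open Filter Topology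
open scoped RealInnerProductSpace

lemma norm_sub_apply_le_of_nonexpansive {E : Type*} [SeminormedAddCommGroup E] {D : Set E}
    {T : E → E} (hT : ∀ y ∈ D, ∀ z ∈ D, ‖T y - T z‖ ≤ ‖y - z‖) {a p : E} (ha : a ∈ D)
    (hp : p ∈ D) :
    ‖a - T p‖ ≤ ‖a - T a‖ + ‖a - p‖ :=
  (norm_sub_le_norm_sub_add_norm_sub a (T a) (T p)).trans (by gcongr; exact hT a ha p hp)

section

variable {H : Type*} [NormedAddCommGroup H] [InnerProductSpace ℝ H]

lemma tendsto_inner_sub_of_forall_tendsto_inner {x : ℕ → H} {p : H}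
    (hweak : ∀ y : H, Tendsto (fun n => ⟪x n, y⟫) atTop (𝓝 ⟪p, y⟫)) (y : H) :
    Tendsto (fun n => ⟪x n - p, y⟫) atTop (𝓝 0) := by
  simpa only [inner_sub_left, sub_self] using (hweak y).sub_const ⟪p, y⟫

lemma mem_of_forall_tendsto_inner_of_isComplete_of_convex {D : Set H} (hDcomplete : IsComplete D)
    (hDconv : Convex ℝ D) {x : ℕ → H} (hxD : ∀ n, x n ∈ D) {p : H}
    (hweak : ∀ y : H, Tendsto (fun n => ⟪x n, y⟫) atTop (𝓝 ⟪p, y⟫)) :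
    p ∈ D := by
  obtain ⟨q, hqD, hq⟩ := exists_norm_eq_iInf_of_complete_convex ⟨x 0, hxD 0⟩ hDcomplete hDconv p
  have hobtuse : ∀ n, ⟪x n - q, p - q⟫ ≤ 0 := fun n => by
    rw [real_inner_comm]
    exact (norm_eq_iInf_iff_real_inner_le_zero hDconv hqD).mp hq (x n) (hxD n)
  have hlim : Tendsto (fun n => ⟪x n - q, p - q⟫) atTop (𝓝 ⟪p - q, p - q⟫) := by
    simpa only [inner_sub_left] using (hweak (p - q)).sub_const ⟪q, p - q⟫
  have hpq : p - q = 0 := real_inner_self_nonpos.mp (le_of_tendsto' hlim hobtuse)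
  rwa [sub_eq_zero.mp hpq]

lemma norm_sq_le_of_norm_add_le {u v : H} {e : ℝ} (h : ‖u + v‖ ≤ e + ‖u‖) :
    ‖v‖ ^ 2 ≤ e ^ 2 + 2 * e * ‖u‖ - 2 * ⟪u, v⟫ := by
  have hsq : ‖u + v‖ ^ 2 ≤ (e + ‖u‖) ^ 2 := pow_le_pow_left₀ (norm_nonneg _) h 2
  rw [norm_add_sq_real] at hsq
  linarith

lemma apply_eq_self_of_forall_tendsto_inner_of_nonexpansive {D : Set H}
    (hDbdd : Bornology.IsBounded D) {T : H → H} (hT : ∀ y ∈ D, ∀ z ∈ D, ‖T y - T z‖ ≤ ‖y - z‖)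
    {x : ℕ → H} (hxD : ∀ n, x n ∈ D) {p : H} (hpD : p ∈ D)
    (hweak : ∀ y : H, Tendsto (fun n => ⟪x n, y⟫) atTop (𝓝 ⟪p, y⟫))
    (hstrong : Tendsto (fun n => x n - T (x n)) atTop (𝓝 0)) :
    T p = p := by
  set v := p - T p
  set e : ℕ → ℝ := fun n => ‖x n - T (x n)‖
  have he : Tendsto e atTop (𝓝 0) := by simpa only [norm_zero] using hstrong.norm
  have hdiam : ∀ n, ‖x n - p‖ ≤ Metric.diam D := fun n => by
    rw [← dist_eq_norm]
    exact Metric.dist_le_diam_of_mem hDbdd (hxD n) hpD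
  have hbound : ∀ n, ‖v‖ ^ 2 ≤ e n ^ 2 + 2 * e n * Metric.diam D - 2 * ⟪x n - p, v⟫ := fun n => by
    have hsplit : x n - T p = (x n - p) + v := (sub_add_sub_cancel _ _ _).symm
    have h := norm_sq_le_of_norm_add_le (hsplit ▸ norm_sub_apply_le_of_nonexpansive hT (hxD n) hpD)
    have he_nonneg : 0 ≤ e n := norm_nonneg _
    nlinarith [mul_le_mul_of_nonneg_left (hdiam n) he_nonneg]
  have hlim : Tendsto (fun n => e n ^ 2 + 2 * e n * Metric.diam D - 2 * ⟪x n - p, v⟫)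
      atTop (𝓝 0) := by
    simpa using ((he.pow 2).add ((he.const_mul 2).mul_const _)).sub
      ((tendsto_inner_sub_of_forall_tendsto_inner hweak v).const_mul 2)
  have hv : ‖v‖ ^ 2 ≤ 0 := ge_of_tendsto' hlim hbound
  exact (sub_eq_zero.mp (norm_eq_zero.mp (by nlinarith [norm_nonneg v]))).symm

end

theorem stmt10_general {H : Type*} [NormedAddCommGroup H] [InnerProductSpace ℝ H] [CompleteSpace H]
    (D : Set H) (hDclosed : IsClosed D) (hDconv : Convex ℝ D)
    (hDbdd : Bornology.IsBounded D)
    (T : H → H) (hT : ∀ y ∈ D, ∀ z ∈ D, ‖T y - T z‖ ≤ ‖y - z‖)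
    (x : ℕ → H) (hxD : ∀ n : ℕ, x n ∈ D) (p : H)
    (hweak : ∀ y : H, Filter.Tendsto (fun n => ⟪x n, y⟫) Filter.atTop (nhds ⟪p, y⟫))
    (hstrong : Filter.Tendsto (fun n => x n - T (x n)) Filter.atTop (nhds 0)) :
    p ∈ D ∧ T p = p := by
  have hpD : p ∈ D :=
    mem_of_forall_tendsto_inner_of_isComplete_of_convex hDclosed.isComplete hDconv hxD hweak
  exact ⟨hpD, apply_eq_self_of_forall_tendsto_inner_of_nonexpansive hDbdd hT hxD hpD hweak hstrong⟩

/-- **Demiclosedness principle on a bounded closed convex set.**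
Let `H` be a real Hilbert space, `D ⊆ H` nonempty closed convex bounded, and
`T` nonexpansive on `D`.  If `(x_n) ⊆ D`, `x_n ⇀ x` weakly, and `x_n − T x_n → 0`
strongly, then `x ∈ D` and `T x = x`. -/
theorem stmt10 {H : Type*} [NormedAddCommGroup H] [InnerProductSpace ℝ H] [CompleteSpace H]
    (D : Set H) (hDne : D.Nonempty) (hDclosed : IsClosed D) (hDconv : Convex ℝ D)
    (hDbdd : Bornology.IsBounded D)
    (T : H → H) (hT : ∀ y ∈ D, ∀ z ∈ D, ‖T y - T z‖ ≤ ‖y - z‖)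
    (x : ℕ → H) (hxD : ∀ n : ℕ, x n ∈ D) (p : H)
    (hweak : ∀ y : H, Filter.Tendsto (fun n => ⟪x n, y⟫) Filter.atTop (nhds ⟪p, y⟫))
    (hstrong : Filter.Tendsto (fun n => x n - T (x n)) Filter.atTop (nhds 0)) :
    p ∈ D ∧ T p = p :=
  stmt10_general D hDclosed hDconv hDbdd T hT x hxD p hweak hstrong
end

section
/- Let ℓ : ℝ → (−∞, +∞] be proper lower semicontinuous convex, non-negative on its domain, with dom ℓ = [0, +∞), increasing, strictly convex on [0, +∞), and supercoercive. Let F : ℝ → (−∞, +∞] be proper lower semicontinuous convex with dom F = [0, +∞) and supercoercive. Let K = ℝ₊ × ℝ₋ × ℝ₊ × ℝ₋ ⊂ ℝ⁴ and let C ∈ {K, ℝ⁴}. Define b : ℝ × ℝ⁴ → (−∞, +∞] by b(ρ, ω) = ρ·ℓ(‖ω‖/ρ) if ρ > 0, b(0, 0) = 0, and b(ρ, ω) = +∞ otherwise, and define φ : ℝ × ℝ⁴ → (−∞, +∞] by φ(ρ, ω) = b(ρ, ω) + F(ρ) + ι_C(ω). Then for every (ρ*, ω*) ∈ ℝ ×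 ℝ⁴, the Fenchel conjugate of φ satisfies φ*(ρ*, ω*) = F*(ρ* + ℓ*(‖P_C ω*‖)), where P_C is the Euclidean projection onto C. -/
open scoped RealInnerProductSpace
open Classical

open Set Filter

/-!
Write `q = P_C ω*`. Because `C` is a closed convex cone, `ω* - q` is orthogonal to `q` and has
nonpositive inner product with every point of `C`, so `⟪ω, ω*⟫ ≤ ‖q‖ ‖ω‖` on `C`, with equality
along the ray through `q`. Hence, for `ρ > 0`, the supremum over `ω ∈ C` of
`⟪ω, ω*⟫ - ρ ℓ(‖ω‖ / ρ)` is a supremum over `r = ‖ω‖ / ρ ≥ 0` and equals `ρ ℓ*(‖q‖)`, which is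
finite since `ℓ` is supercoercive. Taking in `φ*` the supremum over `ω` first leaves
`sup_ρ ((ρ* + ℓ*(‖q‖)) ρ - F ρ) = F*(ρ* + ℓ*(‖q‖))`.
-/

namespace EReal

theorem iSup_eq_coe_of_isLUB {ι : Type*} {g : ι → EReal} {f : ι → ℝ} {S : Set ι} {a : ℝ}
    (hS : ∀ i ∈ S, g i = f i) (hnS : ∀ i ∉ S, g i = ⊥) (ha : IsLUB (f '' S) a) :
    ⨆ i, g i = a := by
  refine le_antisymm (iSup_le fun i => ?_) ?_
  · by_cases hi : i ∈ S
    · exact (hS i hi).trans_le (EReal.coe_le_coe_iff.2 (ha.1 ⟨i, hi, rfl⟩))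
    · simp [hnS i hi]
  · obtain ⟨_, ⟨i₀, hi₀, rfl⟩⟩ := ha.nonempty
    induction h : ⨆ i, g i with
    | bot => simpa [hS i₀ hi₀, h] using le_iSup g i₀
    | coe c =>
      refine EReal.coe_le_coe_iff.2 (ha.2 ?_)
      rintro _ ⟨i, hi, rfl⟩
      exact EReal.coe_le_coe_iff.1 (hS i hi ▸ h ▸ le_iSup g i)
    | top => exact le_top

end EReal

section ConjugateOfSupercoercive

variable {l : ℝ → ℝ} {s t : ℝ}

theorem exists_isLUB_mul_sub_of_tendsto_div_atTop (hmono : MonotoneOn l (Ici 0))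
    (hsuper : Tendsto (fun r => l r / r) atTop atTop) (s : ℝ) :
    ∃ t, IsLUB ((fun r => s * r - l r) '' Ici 0) t := by
  obtain ⟨M, hM⟩ := eventually_atTop.1 (hsuper.eventually_ge_atTop s)
  refine Real.exists_isLUB (image_nonempty.2 nonempty_Ici) ⟨max 0 (|s| * max M 1 - l 0), ?_⟩
  rintro _ ⟨r, hr, rfl⟩
  rcases le_or_gt r (max M 1) with hrM | hrM
  · have hl0 : l 0 ≤ l r := hmono self_mem_Ici hr hr
    have hsr : s * r ≤ |s| * max M 1 := by
      calc s * r ≤ |s| * r := mul_le_mul_of_nonneg_right (le_abs_self s) hr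
        _ ≤ |s| * max M 1 := by gcongr
    exact le_max_of_le_right (by linarith)
  · have hr0 : 0 < r := by linarith [le_max_right M 1]
    have := hM r ((le_max_left M 1).trans hrM.le)
    rw [le_div_iff₀ hr0] at this
    exact le_max_of_le_left (by linarith)

theorem exists_lt_mul_sub_of_lt_isLUB (hmono : MonotoneOn l (Ici 0))
    (ht : IsLUB ((fun r => s * r - l r) '' Ici 0) t) (hs : 0 ≤ s) {c : ℝ} (hc : c < t) :
    ∃ r, 0 ≤ r ∧ (0 < s ∨ r = 0) ∧ c < s * r - l r := by
  obtain ⟨_, ⟨r, hr, rfl⟩, hcr⟩ := (lt_isLUB_iff ht).1 hc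
  -- `s = 0` is the case `P_C ξ = 0`, where only `ω = 0` is available; monotonicity makes `r = 0`
  -- good enough
  rcases hs.lt_or_eq with hs | rfl
  · exact ⟨r, hr, .inl hs, hcr⟩
  · have := hmono self_mem_Ici hr hr
    exact ⟨0, le_rfl, .inr rfl, by simp only [zero_mul, zero_sub] at hcr ⊢; linarith⟩

end ConjugateOfSupercoercive

theorem inner_sub_le_zero_of_isMinOn_norm_sub {E : Type*} [NormedAddCommGroup E]
    [InnerProductSpace ℝ E] {K : Set E} (hK : Convex ℝ K) {u v : E} (hv : v ∈ K)
    (hmin : IsMinOn (fun w => ‖u - w‖) K v) : ∀ w ∈ K, ⟪u - v, w - v⟫ ≤ 0 :=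
  (norm_eq_iInf_iff_real_inner_le_zero hK hv).1 (hmin.iInf_eq hv).symm

namespace PointedCone

variable {E : Type*} [NormedAddCommGroup E] [InnerProductSpace ℝ E] {C : PointedCone ℝ E}
  {ξ q : E}

theorem inner_sub_proj_self_eq_zero (hq : q ∈ C) (hmin : IsMinOn (fun u => ‖ξ - u‖) C q) :
    ⟪ξ - q, q⟫ = 0 := by
  have hvar := inner_sub_le_zero_of_isMinOn_norm_sub C.convex hq hmin
  have h₀ := hvar 0 C.zero_mem
  have h₂ := hvar ((2 : ℝ) • q) (C.smul_mem zero_le_two hq)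
  rw [zero_sub, inner_neg_right] at h₀
  rw [two_smul, add_sub_cancel_right] at h₂
  linarith

theorem inner_sub_proj_le_zero (hq : q ∈ C) (hmin : IsMinOn (fun u => ‖ξ - u‖) C q)
    {u : E} (hu : u ∈ C) : ⟪ξ - q, u⟫ ≤ 0 := by
  simpa using inner_sub_le_zero_of_isMinOn_norm_sub C.convex hq hmin (u + q) (C.add_mem hu hq)

theorem inner_proj_eq_norm_sq (hq : q ∈ C) (hmin : IsMinOn (fun u => ‖ξ - u‖) C q) :
    ⟪q, ξ⟫ = ‖q‖ ^ 2 := by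
  have := inner_sub_proj_self_eq_zero hq hmin
  rw [inner_sub_left, real_inner_self_eq_norm_sq, real_inner_comm] at this
  linarith

theorem inner_le_norm_proj_mul_norm (hq : q ∈ C) (hmin : IsMinOn (fun u => ‖ξ - u‖) C q)
    {u : E} (hu : u ∈ C) : ⟪u, ξ⟫ ≤ ‖q‖ * ‖u‖ :=
  calc ⟪u, ξ⟫ = ⟪u, q⟫ + ⟪ξ - q, u⟫ := by
        rw [inner_sub_left, real_inner_comm ξ, real_inner_comm q]; ring
    _ ≤ ‖u‖ * ‖q‖ + 0 := add_le_add (real_inner_le_norm u q) (inner_sub_proj_le_zero hq hmin hu)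
    _ = ‖q‖ * ‖u‖ := by ring

theorem exists_mem_norm_eq_inner_eq (hq : q ∈ C) (hmin : IsMinOn (fun u => ‖ξ - u‖) C q)
    {x : ℝ} (hx : 0 ≤ x) (h : 0 < ‖q‖ ∨ x = 0) : ∃ ω ∈ C, ‖ω‖ = x ∧ ⟪ω, ξ⟫ = ‖q‖ * x := by
  rcases h with hq0 | rfl
  · refine ⟨(x / ‖q‖) • q, C.smul_mem (by positivity) hq, ?_, ?_⟩
    · rw [norm_smul, Real.norm_of_nonneg (by positivity)]
      field_simp
    · rw [real_inner_smul_left, inner_proj_eq_norm_sq hq hmin]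
      field_simp
  · exact ⟨0, C.zero_mem, norm_zero, by simp⟩

theorem isLUB_inner_sub_perspective {l : ℝ → ℝ} {t ρ : ℝ} (hq : q ∈ C)
    (hmin : IsMinOn (fun u => ‖ξ - u‖) C q) (hmono : MonotoneOn l (Ici 0))
    (ht : IsLUB ((fun r => ‖q‖ * r - l r) '' Ici 0) t) (hρ : 0 < ρ) :
    IsLUB ((fun ω => ⟪ω, ξ⟫ - ρ * l (‖ω‖ / ρ)) '' C) (ρ * t) := by
  refine ⟨?_, fun b hb => ?_⟩
  · rintro _ ⟨ω, hω, rfl⟩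
    have h₁ := inner_le_norm_proj_mul_norm hq hmin hω
    have h₂ := ht.1 ⟨‖ω‖ / ρ, div_nonneg (norm_nonneg ω) hρ.le, rfl⟩
    calc ⟪ω, ξ⟫ - ρ * l (‖ω‖ / ρ) ≤ ρ * (‖q‖ * (‖ω‖ / ρ) - l (‖ω‖ / ρ)) := by
          rw [mul_sub, mul_left_comm, mul_div_cancel₀ _ hρ.ne']; linarith
      _ ≤ ρ * t := mul_le_mul_of_nonneg_left h₂ hρ.le
  · by_contra! hb'
    obtain ⟨r, hr, hr', hlt⟩ := exists_lt_mul_sub_of_lt_isLUB hmono ht (norm_nonneg q)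
      (c := b / ρ) (by rwa [div_lt_iff₀' hρ])
    obtain ⟨ω, hω, hωn, hωi⟩ := exists_mem_norm_eq_inner_eq hq hmin (x := ρ * r) (by positivity)
      (hr'.imp_right fun h => by rw [h, mul_zero])
    have := hb ⟨ω, hω, rfl⟩
    rw [div_lt_iff₀' hρ] at hlt
    simp only [hωn, hωi, mul_div_cancel_left₀ r hρ.ne'] at this
    nlinarith

end PointedCone

section Integrand

variable {E : Type*} [NormedAddCommGroup E] [InnerProductSpace ℝ E]

noncomputable def extendByTop (f : ℝ → ℝ) (r : ℝ) : EReal := if 0 ≤ r then (f r : EReal) else ⊤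

noncomputable def normPerspective [DecidableEq E] (l : ℝ → ℝ) (ρ : ℝ) (ω : E) : EReal :=
  if 0 < ρ then (ρ : EReal) * extendByTop l (‖ω‖ / ρ) else if ρ = 0 ∧ ω = 0 then 0 else ⊤

noncomputable def indicatorTop (C : Set E) (ω : E) : EReal := if ω ∈ C then 0 else ⊤

variable {C : PointedCone ℝ E} {ξ q : E} {l G : ℝ → ℝ} {s t : ℝ}

theorem iSup_mul_sub_extendByTop_eq (ht : IsLUB ((fun r => s * r - l r) '' Ici 0) t) :
    ⨆ r : ℝ, ((s * r : ℝ) : EReal) - extendByTop l r = t :=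
  EReal.iSup_eq_coe_of_isLUB
    (fun r hr => by rw [extendByTop, if_pos (mem_Ici.1 hr), EReal.coe_sub])
    (fun r hr => by rw [extendByTop, if_neg (mt mem_Ici.2 hr), EReal.sub_top]) ht

theorem iSup_inner_sub_integrand_eq [DecidableEq E] (hq : q ∈ C)
    (hmin : IsMinOn (fun u => ‖ξ - u‖) C q) (hmono : MonotoneOn l (Ici 0))
    (ht : IsLUB ((fun r => ‖q‖ * r - l r) '' Ici 0) t) (ρ σ : ℝ) :
    ⨆ ω : E, ((ρ * σ + ⟪ω, ξ⟫ : ℝ) : EReal) -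
        (normPerspective l ρ ω + extendByTop G ρ + indicatorTop C ω) =
      (((σ + t) * ρ : ℝ) : EReal) - extendByTop G ρ := by
  rcases lt_or_ge ρ 0 with hρ | hρ
  · have hG : extendByTop G ρ = ⊤ := if_neg hρ.not_ge
    simp only [hG, EReal.sub_top]
    refine iSup_eq_bot.2 fun ω => ?_
    rw [normPerspective, if_neg hρ.not_gt, if_neg fun h => hρ.ne h.1, EReal.top_add_top,
      indicatorTop]
    split_ifs <;> simp
  · rw [extendByTop, if_pos hρ, ← EReal.coe_sub]
    rcases hρ.eq_or_lt with rfl | hρ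
    · refine EReal.iSup_eq_coe_of_isLUB (S := {0}) (f := fun ω => 0 * σ + ⟪ω, ξ⟫ - G 0) ?_ ?_ ?_
      · rintro ω rfl
        simp [normPerspective, indicatorTop]
      · intro ω hω
        rw [normPerspective, if_neg (lt_irrefl 0), if_neg fun h => hω h.2, indicatorTop]
        split_ifs <;> simp
      · simp [isLUB_singleton]
    · refine EReal.iSup_eq_coe_of_isLUB (S := C)
        (f := fun ω => ρ * σ + ⟪ω, ξ⟫ - (ρ * l (‖ω‖ / ρ) + G ρ)) (fun ω hω => ?_)
        (fun ω hω => ?_) ?_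
      · simp [normPerspective, extendByTop, indicatorTop, hω, hρ, hρ.le, div_nonneg,
          ← EReal.coe_mul, ← EReal.coe_add]
      · simp [normPerspective, extendByTop, indicatorTop, hω, hρ, hρ.le, div_nonneg,
          ← EReal.coe_mul, ← EReal.coe_add]
      · have hf : (fun ω => ρ * σ + ⟪ω, ξ⟫ - (ρ * l (‖ω‖ / ρ) + G ρ)) =
            (ρ * σ - G ρ + ·) ∘ fun ω => ⟪ω, ξ⟫ - ρ * l (‖ω‖ / ρ) := by
          funext ω; simp only [Function.comp_apply]; ring
        rw [hf, image_comp, show (σ + t) * ρ - G ρ = ρ * σ - G ρ + ρ * t by ring]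
        exact (OrderIso.addLeft _).isLUB_image'.2
          (PointedCone.isLUB_inner_sub_perspective hq hmin hmono ht hρ)

end Integrand

def signedOrthant : PointedCone ℝ (EuclideanSpace ℝ (Fin 4)) where
  carrier := {ω | 0 ≤ ω 0 ∧ ω 1 ≤ 0 ∧ 0 ≤ ω 2 ∧ ω 3 ≤ 0}
  add_mem' := by
    rintro u v ⟨hu0, hu1, hu2, hu3⟩ ⟨hv0, hv1, hv2, hv3⟩
    simp only [mem_ofPred_eq, PiLp.add_apply]
    exact ⟨add_nonneg hu0 hv0, add_nonpos hu1 hv1, add_nonneg hu2 hv2, add_nonpos hu3 hv3⟩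
  zero_mem' := by simp
  smul_mem' := by
    rintro ⟨c, hc⟩ u ⟨hu0, hu1, hu2, hu3⟩
    simp only [mem_ofPred_eq, PiLp.smul_apply, Nonneg.mk_smul, smul_eq_mul]
    exact ⟨mul_nonneg hc hu0, mul_nonpos_of_nonneg_of_nonpos hc hu1, mul_nonneg hc hu2,
      mul_nonpos_of_nonneg_of_nonpos hc hu3⟩

theorem stmt13_general
    (K : Set (EuclideanSpace ℝ (Fin 4)))
    (hK : K = {ω : EuclideanSpace ℝ (Fin 4) | 0 ≤ ω 0 ∧ ω 1 ≤ 0 ∧ 0 ≤ ω 2 ∧ ω 3 ≤ 0})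
    (C : Set (EuclideanSpace ℝ (Fin 4))) (hC : C = K ∨ C = Set.univ)
    (P : EuclideanSpace ℝ (Fin 4) → EuclideanSpace ℝ (Fin 4))
    (hP : ∀ ξ : EuclideanSpace ℝ (Fin 4), P ξ ∈ C ∧ ∀ u ∈ C, ‖ξ - P ξ‖ ≤ ‖ξ - u‖)
    (ℓ : ℝ → EReal) (lR : ℝ → ℝ)
    (hl : ∀ r : ℝ, ℓ r = if 0 ≤ r then (lR r : EReal) else ⊤)
    (hlmono : MonotoneOn lR (Set.Ici 0))
    (hlsuper : Filter.Tendsto (fun r : ℝ => lR r / r) Filter.atTop Filter.atTop)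
    (F : ℝ → EReal) (FR : ℝ → ℝ)
    (hF : ∀ ρ : ℝ, F ρ = if 0 ≤ ρ then (FR ρ : EReal) else ⊤)
    (b : ℝ → EuclideanSpace ℝ (Fin 4) → EReal)
    (hb : ∀ (ρ : ℝ) (ω : EuclideanSpace ℝ (Fin 4)),
      b ρ ω = if 0 < ρ then (ρ : EReal) * ℓ (‖ω‖ / ρ)
        else if ρ = 0 ∧ ω = 0 then (0 : EReal) else ⊤)
    (φ : ℝ → EuclideanSpace ℝ (Fin 4) → EReal)
    (hφ : ∀ (ρ : ℝ) (ω : EuclideanSpace ℝ (Fin 4)),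
      φ ρ ω = b ρ ω + F ρ + (if ω ∈ C then (0 : EReal) else ⊤)) :
    ∀ (ρs : ℝ) (ωs : EuclideanSpace ℝ (Fin 4)), ∃ t : ℝ,
      (⨆ r : ℝ, ((‖P ωs‖ * r : ℝ) : EReal) - ℓ r) = (t : EReal) ∧
      (⨆ p : ℝ × EuclideanSpace ℝ (Fin 4),
          ((p.1 * ρs + ⟪p.2, ωs⟫ : ℝ) : EReal) - φ p.1 p.2) =
        ⨆ ρ : ℝ, (((ρs + t) * ρ : ℝ) : EReal) - F ρ := by
  intro ρs ωs
  obtain ⟨D, rfl⟩ : ∃ D : PointedCone ℝ (EuclideanSpace ℝ (Fin 4)), (D : Set _) = C := by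
    rcases hC with rfl | rfl
    exacts [⟨signedOrthant, hK.symm⟩, ⟨⊤, Submodule.top_coe⟩]
  obtain rfl : ℓ = extendByTop lR := funext hl
  obtain rfl : F = extendByTop FR := funext hF
  obtain rfl : b = normPerspective lR := funext₂ hb
  obtain rfl : φ = fun ρ ω => normPerspective lR ρ ω + extendByTop FR ρ + indicatorTop D ω :=
    funext₂ hφ
  have hmin : IsMinOn (fun u => ‖ωs - u‖) D (P ωs) := isMinOn_iff.2 (hP ωs).2
  obtain ⟨t, ht⟩ := exists_isLUB_mul_sub_of_tendsto_div_atTop hlmono hlsuper ‖P ωs‖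
  refine ⟨t, iSup_mul_sub_extendByTop_eq ht, ?_⟩
  rw [iSup_prod]
  exact iSup_congr fun ρ => iSup_inner_sub_integrand_eq (hP ωs).1 hmin hlmono ht ρ ρs

/-- **Proposition 4.4(i): Fenchel conjugate of the perspective-like integrand.**
With `ℓ : ℝ → (−∞,+∞]` proper lsc convex, nonnegative on its domain `[0,∞)`, increasing,
strictly convex on `[0,∞)` and supercoercive (here represented by the real-valued `lR` on
`[0,∞)`), `F` proper lsc convex with domain `[0,∞)` (represented by `FR`) and
supercoercive, `K = ℝ₊ × ℝ₋ × ℝ₊ × ℝ₋ ⊆ ℝ⁴`, `C ∈ {K, ℝ⁴}` with Euclidean projection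
`P = P_C`, `b` the perspective function of `ℓ∘‖·‖`, and
`φ(ρ,ω) = b(ρ,ω) + F(ρ) + ι_C(ω)`, one has, for every `(ρ*, ω*)`:
`φ*(ρ*, ω*) = F*(ρ* + ℓ*(‖P_C ω*‖))`  (with `ℓ*(‖P_C ω*‖)` finite). -/
theorem stmt13
    (K : Set (EuclideanSpace ℝ (Fin 4)))
    (hK : K = {ω : EuclideanSpace ℝ (Fin 4) | 0 ≤ ω 0 ∧ ω 1 ≤ 0 ∧ 0 ≤ ω 2 ∧ ω 3 ≤ 0})
    (C : Set (EuclideanSpace ℝ (Fin 4))) (hC : C = K ∨ C = Set.univ)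
    (P : EuclideanSpace ℝ (Fin 4) → EuclideanSpace ℝ (Fin 4))
    (hP : ∀ ξ : EuclideanSpace ℝ (Fin 4), P ξ ∈ C ∧ ∀ u ∈ C, ‖ξ - P ξ‖ ≤ ‖ξ - u‖)
    (ℓ : ℝ → EReal) (lR : ℝ → ℝ)
    (hl : ∀ r : ℝ, ℓ r = if 0 ≤ r then (lR r : EReal) else ⊤)
    (hllsc : LowerSemicontinuous ℓ)
    (hlconv : ConvexOn ℝ (Set.Ici 0) lR)
    (hlstrict : StrictConvexOn ℝ (Set.Ici 0) lR)
    (hlnonneg : ∀ r : ℝ, 0 ≤ r → 0 ≤ lR r)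
    (hlmono : MonotoneOn lR (Set.Ici 0))
    (hlsuper : Filter.Tendsto (fun r : ℝ => lR r / r) Filter.atTop Filter.atTop)
    (F : ℝ → EReal) (FR : ℝ → ℝ)
    (hF : ∀ ρ : ℝ, F ρ = if 0 ≤ ρ then (FR ρ : EReal) else ⊤)
    (hFlsc : LowerSemicontinuous F)
    (hFconv : ConvexOn ℝ (Set.Ici 0) FR)
    (hFsuper : Filter.Tendsto (fun ρ : ℝ => FR ρ / ρ) Filter.atTop Filter.atTop)
    (b : ℝ → EuclideanSpace ℝ (Fin 4) → EReal)
    (hb : ∀ (ρ : ℝ) (ω : EuclideanSpace ℝ (Fin 4)),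
      b ρ ω = if 0 < ρ then (ρ : EReal) * ℓ (‖ω‖ / ρ)
        else if ρ = 0 ∧ ω = 0 then (0 : EReal) else ⊤)
    (φ : ℝ → EuclideanSpace ℝ (Fin 4) → EReal)
    (hφ : ∀ (ρ : ℝ) (ω : EuclideanSpace ℝ (Fin 4)),
      φ ρ ω = b ρ ω + F ρ + (if ω ∈ C then (0 : EReal) else ⊤)) :
    ∀ (ρs : ℝ) (ωs : EuclideanSpace ℝ (Fin 4)), ∃ t : ℝ,
      (⨆ r : ℝ, ((‖P ωs‖ * r : ℝ) : EReal) - ℓ r) = (t : EReal) ∧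
      (⨆ p : ℝ × EuclideanSpace ℝ (Fin 4),
          ((p.1 * ρs + ⟪p.2, ωs⟫ : ℝ) : EReal) - φ p.1 p.2) =
        ⨆ ρ : ℝ, (((ρs + t) * ρ : ℝ) : EReal) - F ρ :=
  stmt13_general K hK C hC P hP ℓ lR hl hlmono hlsuper F FR hF b hb φ hφ
end

section
/- Let C ⊆ ℝ⁴ be a nonempty closed convex cone and let g : ℝ → ℝ be a convex differentiable increasing function with g'(0) = 0. Then the function ξ ↦ g(‖P_C ξ‖) is differentiable on ℝ⁴ and its gradient equals ζ_C, where ζ_C(ξ) = (g'(‖P_C ξ‖)/‖P_C ξ‖)·P_C ξ if P_C ξ ≠ 0, and ζ_C(ξ) = 0 if P_C ξ = 0. -/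
/-! Moreau's identities for a cone, `⟪x - P x, P x⟫ = 0` and `⟪x - P x, w⟫ ≤ 0` for `w ∈ C`,
together with nonexpansiveness of `P`, squeeze `‖P y‖² - ‖P x‖² - 2⟪P x, y - x⟫` between `0`
and `2‖y - x‖²`, so `‖P ·‖²` has gradient `2 P x`. Where `P ξ ≠ 0` the chain rule through `√` and
`g` gives the formula. Where `P ξ = 0`, the bound `‖P y‖ ≤ ‖y - ξ‖` and `g'(0) = 0` make
`g ‖P y‖ - g 0 = o(‖y - ξ‖)`. -/

open scoped RealInnerProductSpace
open Classical Asymptotics Filter Topology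

theorem HasDerivAt.hasFDerivAt_comp_of_isBigO {𝕜 E F : Type*} [NontriviallyNormedField 𝕜]
    [NormedAddCommGroup E] [NormedSpace 𝕜 E] [NormedAddCommGroup F] [NormedSpace 𝕜 F]
    {g : 𝕜 → F} {f : E → 𝕜} {x : E} (hg : HasDerivAt g 0 (f x))
    (hf : (fun y => f y - f x) =O[𝓝 x] fun y => y - x) :
    HasFDerivAt (fun y => g (f y)) (0 : E →L[𝕜] F) x := by
  have hf_tendsto : Tendsto f (𝓝 x) (𝓝 (f x)) := by
    have := hf.trans_tendsto (tendsto_sub_nhds_zero_iff.2 tendsto_id)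
    exact tendsto_sub_nhds_zero_iff.1 this
  have := (hg.isLittleO.comp_tendsto hf_tendsto).trans_isBigO hf
  refine .of_isLittleO ?_
  simpa [Function.comp_def] using this

theorem HasDerivAt.comp_hasGradientAt {F : Type*} [NormedAddCommGroup F] [InnerProductSpace ℝ F]
    [CompleteSpace F] {g : ℝ → ℝ} {g' : ℝ} {f : F → ℝ} {f' x : F}
    (hg : HasDerivAt g g' (f x)) (hf : HasGradientAt f f' x) :
    HasGradientAt (fun y => g (f y)) (g' • f') x := by
  rw [hasGradientAt_iff_hasFDerivAt, map_smul]
  exact hg.comp_hasFDerivAt x hf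

def IsMetricProjection {E : Type*} [NormedAddCommGroup E] (C : Set E) (P : E → E) : Prop :=
  ∀ x, P x ∈ C ∧ ∀ u ∈ C, ‖x - P x‖ ≤ ‖x - u‖

namespace IsMetricProjection

variable {E : Type*} [NormedAddCommGroup E] [InnerProductSpace ℝ E] {C : Set E} {P : E → E}

theorem inner_sub_sub_nonpos (hP : IsMetricProjection C P) (hC : Convex ℝ C) (x : E) :
    ∀ w ∈ C, ⟪x - P x, w - P x⟫ ≤ 0 := by
  have : Nonempty C := ⟨⟨P x, (hP x).1⟩⟩
  refine (norm_eq_iInf_iff_real_inner_le_zero hC (hP x).1).1 (le_antisymm ?_ ?_)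
  · exact le_ciInf fun w => (hP x).2 w w.2
  · have hbdd : BddBelow (Set.range fun w : C => ‖x - (w : E)‖) :=
      ⟨0, by rintro _ ⟨w, rfl⟩; exact norm_nonneg _⟩
    exact ciInf_le hbdd ⟨P x, (hP x).1⟩

theorem norm_sub_sq_le_inner (hP : IsMetricProjection C P) (hC : Convex ℝ C) (x y : E) :
    ‖P x - P y‖ ^ 2 ≤ ⟪x - y, P x - P y⟫ := by
  have hx := hP.inner_sub_sub_nonpos hC x (P y) (hP y).1
  have hy := hP.inner_sub_sub_nonpos hC y (P x) (hP x).1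
  rw [← neg_sub (P x) (P y), inner_neg_right] at hx
  have : ⟪x - y, P x - P y⟫ - ‖P x - P y‖ ^ 2 = ⟪x - P x, P x - P y⟫ - ⟪y - P y, P x - P y⟫ := by
    rw [← real_inner_self_eq_norm_sq, ← inner_sub_left, ← inner_sub_left]
    congr 1
    abel
  linarith

theorem norm_sub_le (hP : IsMetricProjection C P) (hC : Convex ℝ C) (x y : E) :
    ‖P x - P y‖ ≤ ‖x - y‖ := by
  have := (hP.norm_sub_sq_le_inner hC x y).trans (real_inner_le_norm _ _)
  nlinarith [norm_nonneg (P x - P y), norm_nonneg (x - y)]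

theorem inner_sub_self_eq_zero (hP : IsMetricProjection C P) (hC : Convex ℝ C)
    (hCcone : ∀ x ∈ C, ∀ t : ℝ, 0 ≤ t → t • x ∈ C) (x : E) : ⟪x - P x, P x⟫ = 0 := by
  have h0 := hP.inner_sub_sub_nonpos hC x 0 (by simpa using hCcone _ (hP x).1 0 le_rfl)
  have h2 := hP.inner_sub_sub_nonpos hC x ((2 : ℝ) • P x) (hCcone _ (hP x).1 2 zero_le_two)
  rw [zero_sub, inner_neg_right] at h0
  rw [two_smul, add_sub_cancel_right] at h2
  linarith

theorem inner_sub_nonpos (hP : IsMetricProjection C P) (hC : Convex ℝ C)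
    (hCcone : ∀ x ∈ C, ∀ t : ℝ, 0 ≤ t → t • x ∈ C) (x : E) {w : E} (hw : w ∈ C) :
    ⟪x - P x, w⟫ ≤ 0 := by
  have := hP.inner_sub_sub_nonpos hC x w hw
  rw [inner_sub_right, hP.inner_sub_self_eq_zero hC hCcone x, sub_zero] at this
  exact this

theorem two_mul_inner_le_norm_sq_sub_norm_sq (hP : IsMetricProjection C P) (hC : Convex ℝ C)
    (hCcone : ∀ x ∈ C, ∀ t : ℝ, 0 ≤ t → t • x ∈ C) (x y : E) :
    2 * ⟪P x, y - x⟫ ≤ ‖P y‖ ^ 2 - ‖P x‖ ^ 2 := by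
  have hx : ⟪P x, x⟫ = ‖P x‖ ^ 2 := by
    have := hP.inner_sub_self_eq_zero hC hCcone x
    rwa [inner_sub_left, real_inner_comm, real_inner_self_eq_norm_sq, sub_eq_zero] at this
  have hy : ⟪P x, y⟫ ≤ ⟪P x, P y⟫ := by
    have := hP.inner_sub_nonpos hC hCcone y (hP x).1
    rw [inner_sub_left, real_inner_comm (P x) y, real_inner_comm (P x) (P y)] at this
    linarith
  have hsq := norm_sub_sq_real (P y) (P x)
  rw [real_inner_comm] at hsq
  rw [inner_sub_right, hx]
  nlinarith [sq_nonneg ‖P y - P x‖]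

theorem hasGradientAt_norm_sq [CompleteSpace E] (hP : IsMetricProjection C P)
    (hC : Convex ℝ C) (hCcone : ∀ x ∈ C, ∀ t : ℝ, 0 ≤ t → t • x ∈ C) (x : E) :
    HasGradientAt (fun y => ‖P y‖ ^ 2) ((2 : ℝ) • P x) x := by
  rw [hasGradientAt_iff_isLittleO]
  refine IsBigO.trans_isLittleO (isBigO_of_le' (c := 2) _ fun y => ?_)
    (isLittleO_pow_sub_sub x one_lt_two)
  have hxy := hP.two_mul_inner_le_norm_sq_sub_norm_sq hC hCcone x y
  have hyx := hP.two_mul_inner_le_norm_sq_sub_norm_sq hC hCcone y x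
  have hcs : ⟪P y - P x, y - x⟫ ≤ ‖y - x‖ ^ 2 := by
    calc ⟪P y - P x, y - x⟫ ≤ ‖P y - P x‖ * ‖y - x‖ := real_inner_le_norm _ _
      _ ≤ ‖y - x‖ * ‖y - x‖ := by gcongr; exact hP.norm_sub_le hC y x
      _ = ‖y - x‖ ^ 2 := (sq _).symm
  rw [← neg_sub y x, inner_neg_right] at hyx
  rw [inner_sub_left] at hcs
  rw [real_inner_smul_left, Real.norm_eq_abs, norm_pow, norm_norm, abs_le]
  constructor <;> nlinarith

theorem hasGradientAt_norm [CompleteSpace E] (hP : IsMetricProjection C P)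
    (hC : Convex ℝ C) (hCcone : ∀ x ∈ C, ∀ t : ℝ, 0 ≤ t → t • x ∈ C) {x : E} (hx : P x ≠ 0) :
    HasGradientAt (fun y => ‖P y‖) (‖P x‖⁻¹ • P x) x := by
  have hsqrt := Real.hasDerivAt_sqrt (pow_ne_zero 2 (norm_ne_zero_iff.2 hx))
  have := hsqrt.comp_hasGradientAt (f := fun y => ‖P y‖ ^ 2) (hP.hasGradientAt_norm_sq hC hCcone x)
  simp only [Real.sqrt_sq (norm_nonneg _), smul_smul] at this
  convert this using 2
  field_simp

end IsMetricProjection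

theorem stmt14_general
    (C : Set (EuclideanSpace ℝ (Fin 4)))
    (hCconv : Convex ℝ C)
    (hCcone : ∀ x ∈ C, ∀ t : ℝ, 0 ≤ t → t • x ∈ C)
    (P : EuclideanSpace ℝ (Fin 4) → EuclideanSpace ℝ (Fin 4))
    (hP : ∀ ξ : EuclideanSpace ℝ (Fin 4), P ξ ∈ C ∧ ∀ u ∈ C, ‖ξ - P ξ‖ ≤ ‖ξ - u‖)
    (g : ℝ → ℝ) (hgdiff : Differentiable ℝ g)
    (hg0 : deriv g 0 = 0) :
    ∀ ξ : EuclideanSpace ℝ (Fin 4),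
      HasGradientAt (fun x => g ‖P x‖)
        (if P ξ = 0 then 0 else (deriv g ‖P ξ‖ / ‖P ξ‖) • P ξ) ξ := by
  have hP : IsMetricProjection C P := hP
  intro ξ
  split_ifs with hξ
  · have hg : HasDerivAt g 0 ‖P ξ‖ := by
      simpa [hξ, hg0] using (hgdiff 0).hasDerivAt
    have hnorm : (fun y => ‖P y‖ - ‖P ξ‖) =O[𝓝 ξ] fun y => y - ξ :=
      isBigO_of_le _ fun y => (abs_norm_sub_norm_le _ _).trans (hP.norm_sub_le hCconv y ξ)
    rw [hasGradientAt_iff_hasFDerivAt, map_zero]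
    exact hg.hasFDerivAt_comp_of_isBigO (f := fun y => ‖P y‖) hnorm
  · rw [div_eq_mul_inv, ← smul_smul]
    exact (hgdiff _).hasDerivAt.comp_hasGradientAt (hP.hasGradientAt_norm hCconv hCcone hξ)

/-- **Differentiability of `ξ ↦ g(‖P_C ξ‖)` for a convex increasing `g` with `g'(0) = 0`.**
Let `C ⊆ ℝ⁴` be a nonempty closed convex cone with Euclidean projection `P = P_C`, and
let `g : ℝ → ℝ` be convex, differentiable and increasing with `g'(0) = 0`.  Then
`ξ ↦ g(‖P_C ξ‖)` is differentiable on `ℝ⁴` with gradient `ζ_C`, where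
`ζ_C(ξ) = (g'(‖P_C ξ‖)/‖P_C ξ‖) • P_C ξ` if `P_C ξ ≠ 0` and `ζ_C(ξ) = 0` otherwise. -/
theorem stmt14
    (C : Set (EuclideanSpace ℝ (Fin 4))) (hCne : C.Nonempty)
    (hCclosed : IsClosed C) (hCconv : Convex ℝ C)
    (hCcone : ∀ x ∈ C, ∀ t : ℝ, 0 ≤ t → t • x ∈ C)
    (P : EuclideanSpace ℝ (Fin 4) → EuclideanSpace ℝ (Fin 4))
    (hP : ∀ ξ : EuclideanSpace ℝ (Fin 4), P ξ ∈ C ∧ ∀ u ∈ C, ‖ξ - P ξ‖ ≤ ‖ξ - u‖)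
    (g : ℝ → ℝ) (hgconv : ConvexOn ℝ Set.univ g) (hgdiff : Differentiable ℝ g)
    (hgmono : Monotone g) (hg0 : deriv g 0 = 0) :
    ∀ ξ : EuclideanSpace ℝ (Fin 4),
      HasGradientAt (fun x => g ‖P x‖)
        (if P ξ = 0 then 0 else (deriv g ‖P ξ‖ / ‖P ξ‖) • P ξ) ξ :=
  stmt14_general C hCconv hCcone P hP g hgdiff hg0
end

section
/- Let ℓ : ℝ → (−∞, +∞] be proper lower semicontinuous convex, non-negative on its domain, with dom ℓ = [0, +∞), increasing, strictly convex on [0, +∞), and supercoercive, so that ℓ* is finite, differentiable, and increasing on ℝ with (ℓ*)'(0) = 0. Let F : ℝ → (−∞, +∞] be proper lower semicontinuous convex, strictly convex on dom F = [0, +∞), and supercoercive, so that F* is finite and differentiable on ℝ. Let K = ℝ₊ × ℝ₋ × ℝ₊ × ℝ₋ ⊂ ℝ⁴, let C ∈ {K, ℝ⁴}, let b(ρ, ω) = ρ·ℓ(‖ω‖/ρ) for ρ > 0, b(0,0) = 0, +∞ otherwise, and φ(ρ, ω) = b(ρ, ω) + F(ρ) + ι_C(ω). Then the Fenchel conjugate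 φ* is differentiable on ℝ × ℝ⁴ and ∇φ*(ρ*, ω*) = (F*)'(ρ* + ℓ*(‖P_C ω*‖)) · (1, ζ_C(ω*)), where ζ_C(ω*) = ((ℓ*)'(‖P_C ω*‖)/‖P_C ω*‖)·P_C ω* if P_C ω* ≠ 0 and ζ_C(ω*) = 0 otherwise. -/
/-!
For a convex cone `C`, the metric projection satisfies `⟪P ξ, ξ⟫ = ‖P ξ‖²` and
`⟪ω, ξ⟫ ≤ ‖ω‖ ‖P ξ‖` on `C`, with equality on the ray through `P ξ`. Hence, for fixed `ρ > 0`,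
the supremum over `ω ∈ C` of `⟪ω, ω*⟫ - ρ ℓ(‖ω‖ / ρ)` is `ρ ℓ*(‖P ω*‖)`, and the remaining
supremum over `ρ ≥ 0` is `F*(ρ* + ℓ*(‖P ω*‖))`.

For the gradient, `‖P ·‖² = sup_{ω ∈ C} (2⟪ω, ·⟫ - ‖ω‖²)` lies between its tangent at `ξ₀` and
that tangent plus `2 ‖ξ - ξ₀‖²` (the projection is nonexpansive), so it is differentiable with
gradient `2 P ξ₀`. Where `P ω* = 0`, `ℓ*(‖P ·‖)` is differentiable with zero derivative because
`(ℓ*)'(0) = 0` and `‖P ·‖` is `1`-Lipschitz.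
-/

open scoped RealInnerProductSpace
open Classical

open Filter Asymptotics Set Topology

theorem isLUB_of_mem_upperBounds_of_forall_lt {α : Type*} [LinearOrder α] {s : Set α} {a : α}
    (ha : a ∈ upperBounds s) (h : ∀ b < a, ∃ c ∈ s, b < c) : IsLUB s a :=
  ⟨ha, fun _ hb => le_of_forall_lt fun x hx =>
    let ⟨_, hc, hxc⟩ := h x hx
    hxc.trans_le (hb hc)⟩

theorem EReal.isLUB_coe_image_iff {S : Set ℝ} {c : ℝ} :
    IsLUB (((↑) : ℝ → EReal) '' S) (c : EReal) ↔ IsLUB S c := by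
  refine ⟨fun h => ⟨fun x hx => EReal.coe_le_coe_iff.1 (h.1 (mem_image_of_mem _ hx)),
    fun b hb => EReal.coe_le_coe_iff.1 (h.2 ?_)⟩, fun h => ⟨?_, fun B hB => ?_⟩⟩
  · rintro _ ⟨x, hx, rfl⟩
    exact EReal.coe_le_coe_iff.2 (hb hx)
  · rintro _ ⟨x, hx, rfl⟩
    exact EReal.coe_le_coe_iff.2 (h.1 hx)
  · induction B using EReal.rec with
    | bot =>
      obtain ⟨x, hx, -⟩ := h.exists_between (sub_one_lt c)
      exact absurd (hB (mem_image_of_mem _ hx)) (EReal.coe_ne_bot x ∘ le_bot_iff.1)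
    | coe b =>
      exact EReal.coe_le_coe_iff.2
        (h.2 fun x hx => EReal.coe_le_coe_iff.1 (hB (mem_image_of_mem _ hx)))
    | top => exact le_top

theorem iSup_coe_sub_eq_coe_iff_isLUB {ι : Type*} {D : Set ι} {f : ι → EReal} {a v : ι → ℝ}
    (hD : ∀ i ∈ D, f i = v i) (hDc : ∀ i ∉ D, f i = ⊤) {c : ℝ} :
    (⨆ i, (a i : EReal) - f i) = c ↔ IsLUB ((fun i => a i - v i) '' D) c := by
  have hsup : (⨆ i, (a i : EReal) - f i) = ⨆ i ∈ D, ((a i - v i : ℝ) : EReal) := by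
    refine iSup_congr fun i => ?_
    by_cases hi : i ∈ D
    · simp [hi, hD i hi, EReal.coe_sub]
    · simp [hi, hDc i hi]
  rw [hsup, ← sSup_image, ← EReal.isLUB_coe_image_iff, image_image, isLUB_iff_sSup_eq]

theorem isLUB_of_iSup_mul_sub_eq {f : ℝ → EReal} {fR : ℝ → ℝ}
    (hf : ∀ r : ℝ, f r = if 0 ≤ r then (fR r : EReal) else ⊤) {s c : ℝ}
    (h : (⨆ r : ℝ, ((s * r : ℝ) : EReal) - f r) = c) :
    IsLUB ((fun r => s * r - fR r) '' Ici 0) c :=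
  (iSup_coe_sub_eq_coe_iff_isLUB (fun r (hr : 0 ≤ r) => by rw [hf, if_pos hr])
    (fun r (hr : ¬0 ≤ r) => by rw [hf, if_neg hr])).1 h

theorem hasFDerivAt_comp_of_lipschitzWith_of_hasDerivAt_zero {E : Type*}
    [NormedAddCommGroup E] [NormedSpace ℝ E] {f : ℝ → ℝ} {u : E → ℝ} {K : NNReal} {x₀ : E}
    (hu : LipschitzWith K u) (hf : HasDerivAt f 0 (u x₀)) :
    HasFDerivAt (fun x => f (u x)) (0 : E →L[ℝ] ℝ) x₀ := by
  rw [hasFDerivAt_iff_isLittleO]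
  have hfo := (hasDerivAt_iff_isLittleO.1 hf).comp_tendsto (hu.continuous.tendsto x₀)
  have huO : (fun x => u x - u x₀) =O[𝓝 x₀] fun x => x - x₀ :=
    IsBigO.of_bound K (Eventually.of_forall fun x => by
      simpa only [dist_eq_norm] using hu.dist_le_mul x x₀)
  simpa [Function.comp_def] using hfo.trans_isBigO huO

def IsMetricProj {E : Type*} [NormedAddCommGroup E] (C : Set E) (P : E → E) : Prop :=
  ∀ ξ, P ξ ∈ C ∧ ∀ u ∈ C, ‖ξ - P ξ‖ ≤ ‖ξ - u‖

namespace IsMetricProj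

section ConvexSet

variable {E : Type*} [NormedAddCommGroup E] [InnerProductSpace ℝ E] {C : Set E} {P : E → E}

theorem inner_sub_apply_nonpos (hP : IsMetricProj C P) (hC : Convex ℝ C) (ξ : E) {u : E}
    (hu : u ∈ C) : ⟪ξ - P ξ, u - P ξ⟫ ≤ 0 := by
  have : Nonempty C := ⟨⟨P ξ, (hP ξ).1⟩⟩
  have hbdd : BddBelow (range fun w : C => ‖ξ - w‖) := ⟨0, by rintro _ ⟨w, rfl⟩; positivity⟩
  have hmin : ‖ξ - P ξ‖ = ⨅ w : C, ‖ξ - w‖ :=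
    le_antisymm (le_ciInf fun w => (hP ξ).2 w w.2) (ciInf_le hbdd ⟨P ξ, (hP ξ).1⟩)
  exact (norm_eq_iInf_iff_real_inner_le_zero hC (hP ξ).1).1 hmin u hu

theorem lipschitzWith_one (hP : IsMetricProj C P) (hC : Convex ℝ C) : LipschitzWith 1 P := by
  refine LipschitzWith.of_dist_le_mul fun ξ η => ?_
  rw [NNReal.coe_one, one_mul, dist_eq_norm, dist_eq_norm]
  have hξ := hP.inner_sub_apply_nonpos hC ξ (hP η).1
  have hη := hP.inner_sub_apply_nonpos hC η (hP ξ).1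
  have hfirm : ‖P ξ - P η‖ ^ 2 ≤ ⟪ξ - η, P ξ - P η⟫ := by
    rw [← real_inner_self_eq_norm_sq]
    simp only [inner_sub_left, inner_sub_right] at hξ hη ⊢
    linarith
  have hcs := real_inner_le_norm (ξ - η) (P ξ - P η)
  nlinarith [norm_nonneg (P ξ - P η), norm_nonneg (ξ - η)]

end ConvexSet

section PointedCone

variable {E : Type*} [NormedAddCommGroup E] [InnerProductSpace ℝ E] {C : PointedCone ℝ E}
  {P : E → E}

theorem inner_apply_self (hP : IsMetricProj (C : Set E) P) (ξ : E) : ⟪P ξ, ξ⟫ = ‖P ξ‖ ^ 2 := by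
  have h0 := hP.inner_sub_apply_nonpos C.convex ξ C.zero_mem
  have h2 := hP.inner_sub_apply_nonpos C.convex ξ (C.add_mem (hP ξ).1 (hP ξ).1)
  rw [add_sub_cancel_right] at h2
  rw [zero_sub, inner_neg_right] at h0
  rw [← real_inner_self_eq_norm_sq, real_inner_comm]
  rw [inner_sub_left] at h0 h2
  linarith

theorem inner_le_norm_mul_norm_apply (hP : IsMetricProj (C : Set E) P) (ξ : E) {ω : E}
    (hω : ω ∈ C) : ⟪ω, ξ⟫ ≤ ‖ω‖ * ‖P ξ‖ := by
  have h := hP.inner_sub_apply_nonpos C.convex ξ (C.add_mem hω (hP ξ).1)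
  rw [add_sub_cancel_right, real_inner_comm, inner_sub_right] at h
  linarith [real_inner_le_norm ω (P ξ)]

theorem two_inner_sub_sq_le_norm_apply_sq (hP : IsMetricProj (C : Set E) P) (ξ : E) {ω : E}
    (hω : ω ∈ C) : 2 * ⟪ω, ξ⟫ - ‖ω‖ ^ 2 ≤ ‖P ξ‖ ^ 2 := by
  nlinarith [hP.inner_le_norm_mul_norm_apply ξ hω, sq_nonneg (‖ω‖ - ‖P ξ‖)]

theorem hasFDerivAt_norm_apply_sq (hP : IsMetricProj (C : Set E) P) (ξ₀ : E) :
    HasFDerivAt (fun ξ => ‖P ξ‖ ^ 2) ((2 : ℝ) • innerSL ℝ (P ξ₀)) ξ₀ := by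
  rw [hasFDerivAt_iff_isLittleO]
  refine IsBigO.trans_isLittleO (g := fun ξ => ‖ξ - ξ₀‖ ^ 2) ?_
    (isLittleO_pow_sub_sub ξ₀ one_lt_two)
  refine IsBigO.of_bound 2 (Eventually.of_forall fun ξ => ?_)
  have hlow : 2 * ⟪P ξ₀, ξ⟫ - ‖P ξ₀‖ ^ 2 ≤ ‖P ξ‖ ^ 2 :=
    hP.two_inner_sub_sq_le_norm_apply_sq ξ (hP ξ₀).1
  have hupp : 2 * ⟪P ξ, ξ₀⟫ - ‖P ξ‖ ^ 2 ≤ ‖P ξ₀‖ ^ 2 :=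
    hP.two_inner_sub_sq_le_norm_apply_sq ξ₀ (hP ξ).1
  have hlip : ⟪P ξ - P ξ₀, ξ - ξ₀⟫ ≤ ‖ξ - ξ₀‖ ^ 2 := by
    have h := (hP.lipschitzWith_one C.convex).dist_le_mul ξ ξ₀
    rw [NNReal.coe_one, one_mul, dist_eq_norm, dist_eq_norm] at h
    nlinarith [real_inner_le_norm (P ξ - P ξ₀) (ξ - ξ₀), norm_nonneg (ξ - ξ₀),
      norm_nonneg (P ξ - P ξ₀)]
  rw [inner_sub_left, inner_sub_right, inner_sub_right, hP.inner_apply_self ξ,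
    hP.inner_apply_self ξ₀] at hlip
  simp only [FunLike.coe_smul, Pi.smul_apply, innerSL_apply_apply, smul_eq_mul,
    Real.norm_eq_abs, abs_pow, abs_norm, inner_sub_right, hP.inner_apply_self ξ₀]
  rw [abs_le]
  constructor <;> linarith

theorem hasFDerivAt_norm_apply (hP : IsMetricProj (C : Set E) P) {ξ₀ : E} (hξ₀ : P ξ₀ ≠ 0) :
    HasFDerivAt (fun ξ => ‖P ξ‖) (‖P ξ₀‖⁻¹ • innerSL ℝ (P ξ₀)) ξ₀ := by
  have hpos : 0 < ‖P ξ₀‖ ^ 2 := by positivity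
  have hnorm : (fun ξ => ‖P ξ‖) = fun ξ => √(‖P ξ‖ ^ 2) :=
    funext fun ξ => (Real.sqrt_sq (norm_nonneg _)).symm
  rw [hnorm]
  refine ((Real.hasDerivAt_sqrt hpos.ne').comp_hasFDerivAt ξ₀
    (hP.hasFDerivAt_norm_apply_sq ξ₀)).congr_fderiv ?_
  rw [smul_smul, Real.sqrt_sq (norm_nonneg _)]
  field_simp

theorem hasFDerivAt_comp_norm_apply [DecidableEq E] (hP : IsMetricProj (C : Set E) P)
    {g : ℝ → ℝ} {ξ₀ : E} (hg : DifferentiableAt ℝ g ‖P ξ₀‖) (hg0 : deriv g 0 = 0) :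
    HasFDerivAt (fun ξ => g ‖P ξ‖)
      (innerSL ℝ (if P ξ₀ = 0 then 0 else (deriv g ‖P ξ₀‖ / ‖P ξ₀‖) • P ξ₀)) ξ₀ := by
  by_cases h0 : P ξ₀ = 0
  · rw [if_pos h0, map_zero]
    have hd : HasDerivAt g 0 ‖P ξ₀‖ := by
      simpa [h0, hg0] using hg.hasDerivAt
    exact hasFDerivAt_comp_of_lipschitzWith_of_hasDerivAt_zero
      (lipschitzWith_one_norm.comp (hP.lipschitzWith_one C.convex)) hd
  · rw [if_neg h0]
    refine (hg.hasDerivAt.comp_hasFDerivAt ξ₀ (hP.hasFDerivAt_norm_apply h0)).congr_fderiv ?_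
    ext v
    simp only [smul_apply, innerSL_apply_apply, real_inner_smul_left, smul_eq_mul]
    ring

variable {g : ℝ → ℝ}

theorem isLUB_inner_sub_perspective (hP : IsMetricProj (C : Set E) P)
    (hg : MonotoneOn g (Ici 0)) {ξ : E} {c : ℝ}
    (hc : IsLUB ((fun r => ‖P ξ‖ * r - g r) '' Ici 0) c) {ρ : ℝ} (hρ : 0 < ρ) :
    IsLUB ((fun ω => ⟪ω, ξ⟫ - ρ * g (‖ω‖ / ρ)) '' (C : Set E)) (ρ * c) := by
  refine isLUB_of_mem_upperBounds_of_forall_lt ?_ fun x hx => ?_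
  · rintro _ ⟨ω, hω, rfl⟩
    have hr : ‖ω‖ / ρ ∈ Ici 0 := div_nonneg (norm_nonneg ω) hρ.le
    calc ⟪ω, ξ⟫ - ρ * g (‖ω‖ / ρ)
        ≤ ‖P ξ‖ * (ρ * (‖ω‖ / ρ)) - ρ * g (‖ω‖ / ρ) := by
          rw [mul_div_cancel₀ _ hρ.ne', mul_comm]
          linarith [hP.inner_le_norm_mul_norm_apply ξ hω]
      _ = ρ * (‖P ξ‖ * (‖ω‖ / ρ) - g (‖ω‖ / ρ)) := by ring
      _ ≤ ρ * c := mul_le_mul_of_nonneg_left (hc.1 ⟨_, hr, rfl⟩) hρ.le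
  obtain ⟨_, ⟨r, hr : 0 ≤ r, rfl⟩, hxr, -⟩ := hc.exists_between ((div_lt_iff₀' hρ).2 hx)
  rw [div_lt_iff₀' hρ] at hxr
  by_cases hξ : P ξ = 0
  · refine ⟨_, ⟨0, C.zero_mem, rfl⟩, ?_⟩
    have hgr : g 0 ≤ g r := hg self_mem_Ici hr hr
    simp only [hξ, norm_zero, zero_mul, zero_sub, inner_zero_left, zero_div] at hxr ⊢
    nlinarith
  · have ha : 0 < ‖P ξ‖ := norm_pos_iff.2 hξ
    have ht : 0 ≤ ρ * r / ‖P ξ‖ := by positivity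
    refine ⟨_, ⟨(ρ * r / ‖P ξ‖) • P ξ, C.smul_mem ht (hP ξ).1, rfl⟩, ?_⟩
    have hnorm : ‖(ρ * r / ‖P ξ‖) • P ξ‖ / ρ = r := by
      rw [norm_smul, Real.norm_of_nonneg ht]
      field_simp
    dsimp only at hxr ⊢
    rw [hnorm, real_inner_smul_left, hP.inner_apply_self]
    convert hxr using 1
    field_simp

end PointedCone

end IsMetricProj

/-- The effective domain of `φ = b + F + ι_C`. -/
def integrandDom {E : Type*} [Zero E] (C : Set E) : Set (ℝ × E) :=
  {p | 0 < p.1 ∧ p.2 ∈ C ∨ p = 0}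

theorem IsMetricProj.isLUB_perspective_conjugate {E : Type*} [NormedAddCommGroup E]
    [InnerProductSpace ℝ E] {C : PointedCone ℝ E} {P : E → E} (hP : IsMetricProj (C : Set E) P)
    {g f : ℝ → ℝ} (hg : MonotoneOn g (Ici 0)) {ρs : ℝ} {ξ : E} {c d : ℝ}
    (hc : IsLUB ((fun r => ‖P ξ‖ * r - g r) '' Ici 0) c)
    (hd : IsLUB ((fun ρ => (ρs + c) * ρ - f ρ) '' Ici 0) d) :
    IsLUB ((fun p : ℝ × E => p.1 * ρs + ⟪p.2, ξ⟫ - (p.1 * g (‖p.2‖ / p.1) + f p.1)) ''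
      integrandDom (C : Set E)) d := by
  refine isLUB_of_mem_upperBounds_of_forall_lt ?_ fun x hx => ?_
  · rintro _ ⟨⟨ρ, ω⟩, hp | hp, rfl⟩
    · have hω := (hP.isLUB_inner_sub_perspective hg hc hp.1).1 ⟨ω, hp.2, rfl⟩
      have hρ := hd.1 ⟨ρ, hp.1.le, rfl⟩
      dsimp only at hω hρ ⊢
      linarith
    · simp only [Prod.mk_eq_zero] at hp
      simpa [hp] using hd.1 ⟨0, self_mem_Ici, rfl⟩
  obtain ⟨_, ⟨ρ, hρ, rfl⟩, hxρ, -⟩ := hd.exists_between hx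
  rcases (mem_Ici.1 hρ).eq_or_lt with rfl | hρ
  · exact ⟨_, ⟨0, Or.inr rfl, rfl⟩, by simpa using hxρ⟩
  obtain ⟨_, ⟨ω, hω, rfl⟩, hxω, -⟩ :=
    (hP.isLUB_inner_sub_perspective hg hc hρ).exists_between
      (show x - ρ * ρs + f ρ < ρ * c by linarith)
  exact ⟨_, ⟨(ρ, ω), Or.inl ⟨hρ, hω⟩, rfl⟩, by dsimp only at hxω ⊢; linarith⟩

section Integrand

variable {E : Type*} [NormedAddCommGroup E] [DecidableEq E] {C : Set E} {ℓ F : ℝ → EReal}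
  {lR FR : ℝ → ℝ} {b φ : ℝ → E → EReal}

theorem integrand_eq_of_mem (hl : ∀ r : ℝ, ℓ r = if 0 ≤ r then (lR r : EReal) else ⊤)
    (hF : ∀ ρ : ℝ, F ρ = if 0 ≤ ρ then (FR ρ : EReal) else ⊤)
    (hb : ∀ (ρ : ℝ) (ω : E), b ρ ω = if 0 < ρ then (ρ : EReal) * ℓ (‖ω‖ / ρ)
        else if ρ = 0 ∧ ω = 0 then (0 : EReal) else ⊤)
    (hφ : ∀ (ρ : ℝ) (ω : E), φ ρ ω = b ρ ω + F ρ + (if ω ∈ C then (0 : EReal) else ⊤))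
    (hC0 : (0 : E) ∈ C) :
    ∀ p ∈ integrandDom C, φ p.1 p.2 = ((p.1 * lR (‖p.2‖ / p.1) + FR p.1 : ℝ) : EReal) := by
  rintro ⟨ρ, ω⟩ (⟨hρ, hω⟩ | hp)
  · have hr : 0 ≤ ‖ω‖ / ρ := div_nonneg (norm_nonneg ω) hρ.le
    simp only [hφ, hb, hl, hF, if_pos hω, if_pos hρ, if_pos hr, if_pos hρ.le]
    norm_cast
    simp
  · simp only [Prod.mk_eq_zero] at hp
    obtain ⟨rfl, rfl⟩ := hp
    simp [hφ, hb, hF, hC0]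

theorem integrand_eq_top_of_not_mem (hl : ∀ r : ℝ, ℓ r = if 0 ≤ r then (lR r : EReal) else ⊤)
    (hF : ∀ ρ : ℝ, F ρ = if 0 ≤ ρ then (FR ρ : EReal) else ⊤)
    (hb : ∀ (ρ : ℝ) (ω : E), b ρ ω = if 0 < ρ then (ρ : EReal) * ℓ (‖ω‖ / ρ)
        else if ρ = 0 ∧ ω = 0 then (0 : EReal) else ⊤)
    (hφ : ∀ (ρ : ℝ) (ω : E), φ ρ ω = b ρ ω + F ρ + (if ω ∈ C then (0 : EReal) else ⊤)) :
    ∀ p ∉ integrandDom C, φ p.1 p.2 = ⊤ := by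
  rintro ⟨ρ, ω⟩ hp
  have hFbot : F ρ ≠ ⊥ := by rw [hF]; split_ifs <;> simp
  have hbbot : b ρ ω ≠ ⊥ := by
    rw [hb]
    split_ifs with hρ
    · rw [hl]
      split_ifs
      · exact EReal.coe_mul _ _ ▸ EReal.coe_ne_bot _
      · rw [EReal.coe_mul_top_of_pos hρ]; simp
    all_goals simp
  simp only [integrandDom, mem_ofPred_eq, Prod.mk_eq_zero, not_or, not_and] at hp
  rw [hφ]
  by_cases hω : ω ∈ C
  · rw [if_pos hω, add_zero]
    rcases lt_trichotomy ρ 0 with hρ | rfl | hρ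
    · rw [hF, if_neg (not_le.2 hρ)]
      exact EReal.add_top_of_ne_bot hbbot
    · rw [hb, if_neg (lt_irrefl 0), if_neg (by simpa using hp.2)]
      exact EReal.top_add_of_ne_bot hFbot
    · exact absurd hω (hp.1 hρ)
  · rw [if_neg hω]
    exact EReal.add_top_of_ne_bot (EReal.add_ne_bot_iff.2 ⟨hbbot, hFbot⟩)

end Integrand

theorem exists_pointedCone_coe_eq_signedOrthant :
    ∃ K : PointedCone ℝ (EuclideanSpace ℝ (Fin 4)),
      (K : Set (EuclideanSpace ℝ (Fin 4))) = {ω | 0 ≤ ω 0 ∧ ω 1 ≤ 0 ∧ 0 ≤ ω 2 ∧ ω 3 ≤ 0} := by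
  refine ⟨{ carrier := {ω | 0 ≤ ω 0 ∧ ω 1 ≤ 0 ∧ 0 ≤ ω 2 ∧ ω 3 ≤ 0}
            add_mem' := ?_, zero_mem' := ?_, smul_mem' := ?_ }, rfl⟩
  · rintro ω η ⟨h0, h1, h2, h3⟩ ⟨g0, g1, g2, g3⟩
    simp only [mem_ofPred_eq, PiLp.add_apply]
    refine ⟨?_, ?_, ?_, ?_⟩ <;> linarith
  · simp
  · rintro ⟨c, hc⟩ ω ⟨h0, h1, h2, h3⟩
    simp only [mem_ofPred_eq, PiLp.smul_apply, Nonneg.mk_smul, smul_eq_mul]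
    exact ⟨mul_nonneg hc h0, mul_nonpos_of_nonneg_of_nonpos hc h1, mul_nonneg hc h2,
      mul_nonpos_of_nonneg_of_nonpos hc h3⟩

theorem stmt15_general
    (K : Set (EuclideanSpace ℝ (Fin 4)))
    (hK : K = {ω : EuclideanSpace ℝ (Fin 4) | 0 ≤ ω 0 ∧ ω 1 ≤ 0 ∧ 0 ≤ ω 2 ∧ ω 3 ≤ 0})
    (C : Set (EuclideanSpace ℝ (Fin 4))) (hC : C = K ∨ C = Set.univ)
    (P : EuclideanSpace ℝ (Fin 4) → EuclideanSpace ℝ (Fin 4))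
    (hP : ∀ ξ : EuclideanSpace ℝ (Fin 4), P ξ ∈ C ∧ ∀ u ∈ C, ‖ξ - P ξ‖ ≤ ‖ξ - u‖)
    (ℓ : ℝ → EReal) (lR : ℝ → ℝ)
    (hl : ∀ r : ℝ, ℓ r = if 0 ≤ r then (lR r : EReal) else ⊤)
    (hlmono : MonotoneOn lR (Set.Ici 0))
    (lstar : ℝ → ℝ)
    (hlstar : ∀ s : ℝ, (⨆ r : ℝ, ((s * r : ℝ) : EReal) - ℓ r) = (lstar s : EReal))
    (hlstardiff : Differentiable ℝ lstar)
    (hlstar0 : deriv lstar 0 = 0)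
    (F : ℝ → EReal) (FR : ℝ → ℝ)
    (hF : ∀ ρ : ℝ, F ρ = if 0 ≤ ρ then (FR ρ : EReal) else ⊤)
    (Fstar : ℝ → ℝ)
    (hFstar : ∀ s : ℝ, (⨆ ρ : ℝ, ((s * ρ : ℝ) : EReal) - F ρ) = (Fstar s : EReal))
    (hFstardiff : Differentiable ℝ Fstar)
    (b : ℝ → EuclideanSpace ℝ (Fin 4) → EReal)
    (hb : ∀ (ρ : ℝ) (ω : EuclideanSpace ℝ (Fin 4)),
      b ρ ω = if 0 < ρ then (ρ : EReal) * ℓ (‖ω‖ / ρ)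
        else if ρ = 0 ∧ ω = 0 then (0 : EReal) else ⊤)
    (φ : ℝ → EuclideanSpace ℝ (Fin 4) → EReal)
    (hφ : ∀ (ρ : ℝ) (ω : EuclideanSpace ℝ (Fin 4)),
      φ ρ ω = b ρ ω + F ρ + (if ω ∈ C then (0 : EReal) else ⊤)) :
    (∀ (ρs : ℝ) (ωs : EuclideanSpace ℝ (Fin 4)),
      (⨆ p : ℝ × EuclideanSpace ℝ (Fin 4),
          ((p.1 * ρs + ⟪p.2, ωs⟫ : ℝ) : EReal) - φ p.1 p.2) =
        ((Fstar (ρs + lstar ‖P ωs‖) : ℝ) : EReal)) ∧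
    ∀ (ρs : ℝ) (ωs : EuclideanSpace ℝ (Fin 4)),
      HasFDerivAt (fun p : ℝ × EuclideanSpace ℝ (Fin 4) => Fstar (p.1 + lstar ‖P p.2‖))
        (deriv Fstar (ρs + lstar ‖P ωs‖) •
          (ContinuousLinearMap.fst ℝ ℝ (EuclideanSpace ℝ (Fin 4)) +
            (innerSL ℝ (if P ωs = 0 then 0
                else (deriv lstar ‖P ωs‖ / ‖P ωs‖) • P ωs)).comp
              (ContinuousLinearMap.snd ℝ ℝ (EuclideanSpace ℝ (Fin 4)))))
        (ρs, ωs) := by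
  obtain ⟨C, rfl⟩ : ∃ C' : PointedCone ℝ (EuclideanSpace ℝ (Fin 4)), (C' : Set _) = C := by
    rcases hC with rfl | rfl
    · exact hK ▸ exists_pointedCone_coe_eq_signedOrthant
    · exact ⟨⊤, Submodule.top_coe⟩
  have hP : IsMetricProj (C : Set _) P := hP
  refine ⟨fun ρs ωs => ?_, fun ρs ωs => ?_⟩
  · exact (iSup_coe_sub_eq_coe_iff_isLUB (integrand_eq_of_mem hl hF hb hφ C.zero_mem)
      (integrand_eq_top_of_not_mem hl hF hb hφ)).2
      (hP.isLUB_perspective_conjugate hlmono (isLUB_of_iSup_mul_sub_eq hl (hlstar _))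
        (isLUB_of_iSup_mul_sub_eq hF (hFstar _)))
  · have hlstarProj := (hP.hasFDerivAt_comp_norm_apply (hlstardiff ‖P ωs‖) hlstar0).comp
      (ρs, ωs) (hasFDerivAt_snd (𝕜 := ℝ))
    exact (hFstardiff _).hasDerivAt.comp_hasFDerivAt (ρs, ωs) (hasFDerivAt_fst.add hlstarProj)

/-- **Proposition 4.4(ii): differentiability and gradient of the dual integrand.**
In the setting of Proposition 4.4 (with `ℓ` represented on its domain `[0,∞)` by `lR`,
`F` by `FR`, and with `ℓ* = lstar`, `F* = Fstar` finite and differentiable, `lstar`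
increasing with `(ℓ*)'(0) = 0`), the Fenchel conjugate `φ*` of
`φ(ρ,ω) = b(ρ,ω) + F(ρ) + ι_C(ω)` satisfies
`φ*(ρ*, ω*) = F*(ρ* + ℓ*(‖P_C ω*‖))`, it is differentiable on `ℝ × ℝ⁴`, and its
(Fréchet) derivative at `(ρ*, ω*)` is the linear form
`(dρ, dω) ↦ (F*)'(ρ* + ℓ*(‖P_C ω*‖)) · (dρ + ⟪ζ_C(ω*), dω⟫)`, i.e. its gradient is
`(F*)'(ρ* + ℓ*(‖P_C ω*‖)) · (1, ζ_C(ω*))`, where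
`ζ_C(ω*) = ((ℓ*)'(‖P_C ω*‖)/‖P_C ω*‖) • P_C ω*` if `P_C ω* ≠ 0`, and `0` otherwise. -/
theorem stmt15
    (K : Set (EuclideanSpace ℝ (Fin 4)))
    (hK : K = {ω : EuclideanSpace ℝ (Fin 4) | 0 ≤ ω 0 ∧ ω 1 ≤ 0 ∧ 0 ≤ ω 2 ∧ ω 3 ≤ 0})
    (C : Set (EuclideanSpace ℝ (Fin 4))) (hC : C = K ∨ C = Set.univ)
    (P : EuclideanSpace ℝ (Fin 4) → EuclideanSpace ℝ (Fin 4))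
    (hP : ∀ ξ : EuclideanSpace ℝ (Fin 4), P ξ ∈ C ∧ ∀ u ∈ C, ‖ξ - P ξ‖ ≤ ‖ξ - u‖)
    (ℓ : ℝ → EReal) (lR : ℝ → ℝ)
    (hl : ∀ r : ℝ, ℓ r = if 0 ≤ r then (lR r : EReal) else ⊤)
    (hllsc : LowerSemicontinuous ℓ)
    (hlconv : ConvexOn ℝ (Set.Ici 0) lR)
    (hlstrict : StrictConvexOn ℝ (Set.Ici 0) lR)
    (hlnonneg : ∀ r : ℝ, 0 ≤ r → 0 ≤ lR r)
    (hlmono : MonotoneOn lR (Set.Ici 0))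
    (hlsuper : Filter.Tendsto (fun r : ℝ => lR r / r) Filter.atTop Filter.atTop)
    (lstar : ℝ → ℝ)
    (hlstar : ∀ s : ℝ, (⨆ r : ℝ, ((s * r : ℝ) : EReal) - ℓ r) = (lstar s : EReal))
    (hlstardiff : Differentiable ℝ lstar) (hlstarmono : Monotone lstar)
    (hlstar0 : deriv lstar 0 = 0)
    (F : ℝ → EReal) (FR : ℝ → ℝ)
    (hF : ∀ ρ : ℝ, F ρ = if 0 ≤ ρ then (FR ρ : EReal) else ⊤)
    (hFlsc : LowerSemicontinuous F)
    (hFconv : ConvexOn ℝ (Set.Ici 0) FR)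
    (hFstrict : StrictConvexOn ℝ (Set.Ici 0) FR)
    (hFsuper : Filter.Tendsto (fun ρ : ℝ => FR ρ / ρ) Filter.atTop Filter.atTop)
    (Fstar : ℝ → ℝ)
    (hFstar : ∀ s : ℝ, (⨆ ρ : ℝ, ((s * ρ : ℝ) : EReal) - F ρ) = (Fstar s : EReal))
    (hFstardiff : Differentiable ℝ Fstar)
    (b : ℝ → EuclideanSpace ℝ (Fin 4) → EReal)
    (hb : ∀ (ρ : ℝ) (ω : EuclideanSpace ℝ (Fin 4)),
      b ρ ω = if 0 < ρ then (ρ : EReal) * ℓ (‖ω‖ / ρ)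
        else if ρ = 0 ∧ ω = 0 then (0 : EReal) else ⊤)
    (φ : ℝ → EuclideanSpace ℝ (Fin 4) → EReal)
    (hφ : ∀ (ρ : ℝ) (ω : EuclideanSpace ℝ (Fin 4)),
      φ ρ ω = b ρ ω + F ρ + (if ω ∈ C then (0 : EReal) else ⊤)) :
    (∀ (ρs : ℝ) (ωs : EuclideanSpace ℝ (Fin 4)),
      (⨆ p : ℝ × EuclideanSpace ℝ (Fin 4),
          ((p.1 * ρs + ⟪p.2, ωs⟫ : ℝ) : EReal) - φ p.1 p.2) =
        ((Fstar (ρs + lstar ‖P ωs‖) : ℝ) : EReal)) ∧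
    ∀ (ρs : ℝ) (ωs : EuclideanSpace ℝ (Fin 4)),
      HasFDerivAt (fun p : ℝ × EuclideanSpace ℝ (Fin 4) => Fstar (p.1 + lstar ‖P p.2‖))
        (deriv Fstar (ρs + lstar ‖P ωs‖) •
          (ContinuousLinearMap.fst ℝ ℝ (EuclideanSpace ℝ (Fin 4)) +
            (innerSL ℝ (if P ωs = 0 then 0
                else (deriv lstar ‖P ωs‖ / ‖P ωs‖) • P ωs)).comp
              (ContinuousLinearMap.snd ℝ ℝ (EuclideanSpace ℝ (Fin 4)))))
        (ρs, ωs) :=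
  stmt15_general K hK C hC P hP ℓ lR hl hlmono lstar hlstar hlstardiff hlstar0 F FR hF Fstar hFstar
    hFstardiff b hb φ hφ
end

section
/- Let N ∈ ℕ, N ≥ 1, let K = ℝ₊ × ℝ₋ × ℝ₊ × ℝ₋ ⊂ ℝ⁴ with Euclidean projection P_K, let c_{ij} ∈ ℝ for i, j ∈ {0, …, N−1}, and define φ : ℝ^{N×N} × (ℝ⁴)^{N×N} → ℝ by φ(θ, v) = Σ_{i,j} e^{θ_{ij} + ‖P_K v_{ij}‖²/2 + c_{ij}}. Then φ is convex and differentiable, and for every θ ∈ ℝ^{N×N} and every v ∈ (ℝ⁴)^{N×N} with v_{ij} ∈ ℝ₋ × ℝ₊ × ℝ₋ × ℝ₊ for all i, j (so that P_K v_{ij} = 0), one has ∇φ(θ, v) = ∇φ(θ, 0); in particular ⟨∇φ(θ, v) − ∇φ(θ, 0), (θ, v) − (θ, 0)⟩ = 0. Consequently, for every M > 0 and every μ > 0, φ is not μ-strongly convex on the open ball of radius M centered at (θ, 0). -/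
/-!
Write `σ = (1, -1, 1, -1)`, so that `K = {w | ∀ k, 0 ≤ σₖ wₖ}` and
`‖P_K w‖² / 2 = ∑ₖ (σₖ wₖ)₊² / 2`. Each summand is a convex `C¹` function with derivative
`(σₖ wₖ)₊ σₖ`, so `φ` is a sum of exponentials of convex differentiable functions. On the polar
cone `-K`, where every `σₖ wₖ ≤ 0`, this function and its derivative both vanish, hence neither
`φ` nor `∇φ` sees `v` there. In particular `φ` is constant on a segment from `(θ, 0)` to
`(θ, e)` with `e ∈ -K`, while `‖·‖²` is strictly convex along it, which rules out strong
convexity on every ball around `(θ, 0)`.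
-/

open Set Filter Topology

theorem hasDerivAt_half_max_zero_sq (x : ℝ) :
    HasDerivAt (fun y : ℝ => max y 0 ^ 2 / 2) (max x 0) x := by
  refine hasDerivAt_of_hasDerivAt_of_ne' (g := fun y => max y 0) (x := 0)
    (fun y hy => ?_) (by fun_prop) (by fun_prop) x
  rcases hy.lt_or_gt with hy | hy
  · have : (fun z : ℝ => max z 0 ^ 2 / 2) =ᶠ[𝓝 y] fun _ => 0 := by
      filter_upwards [eventually_lt_nhds hy] with z hz
      simp [hz.le]
    simpa [hy.le] using (hasDerivAt_const y (0 : ℝ)).congr_of_eventuallyEq this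
  · have : (fun z : ℝ => max z 0 ^ 2 / 2) =ᶠ[𝓝 y] fun z => z ^ 2 / 2 := by
      filter_upwards [eventually_gt_nhds hy] with z hz
      simp [hz.le]
    simpa [hy.le] using ((hasDerivAt_pow 2 y).div_const 2).congr_of_eventuallyEq this

theorem convexOn_half_max_zero_sq : ConvexOn ℝ univ fun y : ℝ => max y 0 ^ 2 / 2 :=
  (((convexOn_id convex_univ).sup (convexOn_const 0 convex_univ)).pow
    (fun _ _ => le_max_right _ _) 2 |>.smul (by norm_num : (0 : ℝ) ≤ 1 / 2)).congr
    fun y _ => by simp only [Pi.pow_apply, id, smul_eq_mul]; ring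

theorem ConvexOn.sum {𝕜 E β ι : Type*} [Semiring 𝕜] [PartialOrder 𝕜] [AddCommMonoid E]
    [AddCommMonoid β] [PartialOrder β] [IsOrderedAddMonoid β] [SMul 𝕜 E] [Module 𝕜 β]
    {s : Set E} {t : Finset ι} {f : ι → E → β} (hs : Convex 𝕜 s)
    (hf : ∀ i ∈ t, ConvexOn 𝕜 s (f i)) : ConvexOn 𝕜 s fun x => ∑ i ∈ t, f i x := by
  classical
  induction t using Finset.induction_on with
  | empty => simpa using convexOn_const (0 : β) hs
  | insert a t ha ih =>
    simp only [Finset.sum_insert ha]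
    exact (hf a (t.mem_insert_self a)).add (ih fun i hi => hf i (Finset.mem_insert_of_mem hi))

theorem ConvexOn.exp {E : Type*} [AddCommMonoid E] [Module ℝ E] {s : Set E} {f : E → ℝ}
    (hf : ConvexOn ℝ s f) : ConvexOn ℝ s fun x => Real.exp (f x) :=
  ⟨hf.1, fun _ hx _ hy _ _ ha hb hab => (Real.exp_le_exp.2 (hf.2 hx hy ha hb hab)).trans
    (convexOn_exp.2 (mem_univ _) (mem_univ _) ha hb hab)⟩

/-- `‖P_K w‖² / 2` for the orthant `K = {w | ∀ k, 0 ≤ σₖ wₖ}`, provided every `σₖ = ±1`. -/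
noncomputable def halfSqNormProjOrthant {κ : Type*} [Fintype κ] (σ w : κ → ℝ) : ℝ :=
  ∑ k, max (σ k * w k) 0 ^ 2 / 2

section HalfSqNormProjOrthant

variable {κ : Type*} [Fintype κ] (σ : κ → ℝ)

theorem convexOn_halfSqNormProjOrthant : ConvexOn ℝ univ (halfSqNormProjOrthant σ) :=
  ConvexOn.sum convex_univ fun k _ => convexOn_half_max_zero_sq.comp_linearMap
    (σ k • LinearMap.proj (R := ℝ) (φ := fun _ : κ => ℝ) k)

theorem hasFDerivAt_halfSqNormProjOrthant (w : κ → ℝ) :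
    HasFDerivAt (halfSqNormProjOrthant σ)
      (∑ k, (max (σ k * w k) 0 * σ k) •
        ContinuousLinearMap.proj (R := ℝ) (φ := fun _ : κ => ℝ) k) w := by
  refine HasFDerivAt.fun_sum fun k _ => ?_
  rw [mul_smul]
  exact (hasDerivAt_half_max_zero_sq (σ k * w k)).comp_hasFDerivAt w
    (σ k • ContinuousLinearMap.proj (R := ℝ) (φ := fun _ : κ => ℝ) k).hasFDerivAt

variable {σ} {w : κ → ℝ} (hw : ∀ k, σ k * w k ≤ 0)
include hw

theorem halfSqNormProjOrthant_eq_zero : halfSqNormProjOrthant σ w = 0 :=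
  Finset.sum_eq_zero fun k _ => by simp [hw k]

theorem hasFDerivAt_halfSqNormProjOrthant_of_nonpos :
    HasFDerivAt (halfSqNormProjOrthant σ) (0 : (κ → ℝ) →L[ℝ] ℝ) w := by
  simpa [hw] using hasFDerivAt_halfSqNormProjOrthant σ w

end HalfSqNormProjOrthant

noncomputable def expSum {ι κ F : Type*} [Fintype ι] [Fintype κ] (c : ι → κ → ℝ) (Q : F → ℝ)
    (p : (ι → κ → ℝ) × (ι → κ → F)) : ℝ :=
  ∑ i, ∑ j, Real.exp (p.1 i j + Q (p.2 i j) + c i j)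

theorem expSum_eq_of_forall_eq_zero {ι κ F : Type*} [Fintype ι] [Fintype κ] (c : ι → κ → ℝ)
    {Q : F → ℝ} (θ : ι → κ → ℝ) {v : ι → κ → F} (hv : ∀ i j, Q (v i j) = 0) :
    expSum c Q (θ, v) = ∑ i, ∑ j, Real.exp (θ i j + c i j) := by
  simp [expSum, hv]

section ExpSum

variable {ι κ F : Type*} [NormedAddCommGroup F] [NormedSpace ℝ F]

def coordFst (i : ι) (j : κ) : (ι → κ → ℝ) × (ι → κ → F) →L[ℝ] ℝ :=
  (ContinuousLinearMap.proj j).comp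
    ((ContinuousLinearMap.proj (R := ℝ) (φ := fun _ : ι => κ → ℝ) i).comp
      (ContinuousLinearMap.fst ℝ _ _))

def coordSnd (i : ι) (j : κ) : (ι → κ → ℝ) × (ι → κ → F) →L[ℝ] F :=
  (ContinuousLinearMap.proj j).comp
    ((ContinuousLinearMap.proj (R := ℝ) (φ := fun _ : ι => κ → F) i).comp
      (ContinuousLinearMap.snd ℝ _ _))

@[simp] theorem coordFst_apply (i : ι) (j : κ) (p : (ι → κ → ℝ) × (ι → κ → F)) :
    coordFst i j p = p.1 i j := rfl

@[simp] theorem coordSnd_apply (i : ι) (j : κ) (p : (ι → κ → ℝ) × (ι → κ → F)) :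
    coordSnd i j p = p.2 i j := rfl

variable [Fintype ι] [Fintype κ] (c : ι → κ → ℝ) {Q : F → ℝ}

theorem convexOn_expSum (hQ : ConvexOn ℝ univ Q) : ConvexOn ℝ univ (expSum c Q) :=
  ConvexOn.sum convex_univ fun i _ => ConvexOn.sum convex_univ fun j _ =>
    (((coordFst i j).toLinearMap.convexOn convex_univ).add
      (hQ.comp_linearMap (coordSnd i j).toLinearMap) |>.add_const (c i j)).exp

theorem differentiable_expSum (hQ : Differentiable ℝ Q) : Differentiable ℝ (expSum c Q) := by
  unfold expSum
  fun_prop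

theorem hasFDerivAt_expSum_of_flat (θ : ι → κ → ℝ) {v : ι → κ → F}
    (hv : ∀ i j, Q (v i j) = 0) (hdv : ∀ i j, HasFDerivAt Q (0 : F →L[ℝ] ℝ) (v i j)) :
    HasFDerivAt (expSum c Q) (∑ i, ∑ j, Real.exp (θ i j + c i j) • coordFst i j) (θ, v) := by
  refine HasFDerivAt.fun_sum fun i _ => HasFDerivAt.fun_sum fun j _ => ?_
  have hexponent : HasFDerivAt (fun p : (ι → κ → ℝ) × (ι → κ → F) =>
      p.1 i j + Q (p.2 i j) + c i j) (coordFst i j) (θ, v) := by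
    simpa using (((coordFst i j).hasFDerivAt).add
      ((hdv i j).comp (θ, v) (coordSnd i j).hasFDerivAt)).add_const (c i j)
  have := (Real.hasDerivAt_exp _).comp_hasFDerivAt (θ, v) hexponent
  dsimp only at this
  rwa [hv, add_zero] at this

end ExpSum

theorem expSum_halfSqNormProjOrthant_of_nonpos {ι κ ν : Type*} [Fintype ι] [Fintype κ]
    [Fintype ν] (c θ : ι → κ → ℝ) {σ : ν → ℝ} {u : ι → κ → ν → ℝ}
    (hu : ∀ i j k, σ k * u i j k ≤ 0) :
    expSum c (halfSqNormProjOrthant σ) (θ, u) = ∑ i, ∑ j, Real.exp (θ i j + c i j) :=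
  expSum_eq_of_forall_eq_zero c θ fun i j => halfSqNormProjOrthant_eq_zero (hu i j)

theorem fderiv_expSum_halfSqNormProjOrthant_of_nonpos {ι κ ν : Type*} [Fintype ι] [Fintype κ]
    [Fintype ν] (c θ : ι → κ → ℝ) {σ : ν → ℝ} {u : ι → κ → ν → ℝ}
    (hu : ∀ i j k, σ k * u i j k ≤ 0) :
    fderiv ℝ (expSum c (halfSqNormProjOrthant σ)) (θ, u) =
      ∑ i, ∑ j, Real.exp (θ i j + c i j) • coordFst i j :=
  (hasFDerivAt_expSum_of_flat c θ (fun i j => halfSqNormProjOrthant_eq_zero (hu i j))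
    fun i j => hasFDerivAt_halfSqNormProjOrthant_of_nonpos (hu i j)).fderiv

theorem not_convexOn_sub_sumSq_of_flat {ι κ ν : Type*} [Fintype ι] [Fintype κ] [Fintype ν]
    {s : Set ((ι → κ → ℝ) × (ι → κ → ν → ℝ))} {f : (ι → κ → ℝ) × (ι → κ → ν → ℝ) → ℝ}
    {θ : ι → κ → ℝ} {e : ι → κ → ν → ℝ} {μ : ℝ} (hμ : 0 < μ)
    (he : 0 < ∑ i, ∑ j, ∑ k, e i j k ^ 2) (h₀ : (θ, 0) ∈ s) (h₁ : (θ, e) ∈ s)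
    (hf_half : f (θ, (1 / 2 : ℝ) • e) = f (θ, 0)) (hf_one : f (θ, e) = f (θ, 0)) :
    ¬ ConvexOn ℝ s fun p => f p - μ / 2 *
      ((∑ i, ∑ j, p.1 i j ^ 2) + ∑ i, ∑ j, ∑ k, p.2 i j k ^ 2) := by
  intro hconv
  have hmid : (1 / 2 : ℝ) • (θ, (0 : ι → κ → ν → ℝ)) + (1 / 2 : ℝ) • (θ, e) =
      (θ, (1 / 2 : ℝ) • e) := by
    rw [Prod.smul_mk, Prod.smul_mk, Prod.mk_add_mk, ← add_smul, smul_zero, zero_add]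
    norm_num
  have hsq : ∑ i, ∑ j, ∑ k, ((1 / 2 : ℝ) • e) i j k ^ 2 = (∑ i, ∑ j, ∑ k, e i j k ^ 2) / 4 := by
    simp only [Pi.smul_apply, smul_eq_mul, mul_pow, ← Finset.mul_sum]
    ring
  have := hconv.2 h₀ h₁ (by norm_num : (0 : ℝ) ≤ 1 / 2) (by norm_num : (0 : ℝ) ≤ 1 / 2)
    (by norm_num)
  simp only [hmid, hsq, hf_half, hf_one, smul_eq_mul, Pi.zero_apply, ne_eq,
    OfNat.ofNat_ne_zero, not_false_eq_true, zero_pow, Finset.sum_const_zero, add_zero] at this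
  nlinarith

/-- `K = ℝ₊ × ℝ₋ × ℝ₊ × ℝ₋` is the orthant `{w | ∀ k, 0 ≤ coneSign k * w k}`. -/
def coneSign (k : Fin 4) : ℝ := if k = 0 ∨ k = 2 then 1 else -1

def projK (w : Fin 4 → ℝ) : Fin 4 → ℝ :=
  fun k => if k = 0 ∨ k = 2 then max (w k) 0 else min (w k) 0

theorem projK_sq (w : Fin 4 → ℝ) (k : Fin 4) :
    projK w k ^ 2 = max (coneSign k * w k) 0 ^ 2 := by
  unfold projK coneSign
  split_ifs
  · simp
  · have : max (-w k) 0 = -min (w k) 0 := by simpa using max_neg_neg (w k) 0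
    rw [neg_one_mul, this, neg_sq]

theorem projK_eq_zero {w : Fin 4 → ℝ} (hw : ∀ k, coneSign k * w k ≤ 0) : projK w = 0 := by
  funext k
  have hk := hw k
  unfold coneSign at hk
  unfold projK
  split_ifs at hk ⊢
  · simpa using hk
  · simpa using hk

theorem coneSign_mul_nonpos {u : Fin 4 → ℝ} (hu : u 0 ≤ 0 ∧ 0 ≤ u 1 ∧ u 2 ≤ 0 ∧ 0 ≤ u 3)
    (k : Fin 4) : coneSign k * u k ≤ 0 := by
  obtain ⟨h₀, h₁, h₂, h₃⟩ := hu
  fin_cases k <;> simp [coneSign] <;> assumption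

theorem exists_small_polarK_direction {N : ℕ} (hN : 1 ≤ N) {M : ℝ} (hM : 0 < M) :
    ∃ e : Fin N → Fin N → Fin 4 → ℝ, (∀ t : ℝ, 0 ≤ t → ∀ i j k, coneSign k * (t • e) i j k ≤ 0) ∧
      0 < ∑ i, ∑ j, ∑ k, e i j k ^ 2 ∧ ∑ i, ∑ j, ∑ k, e i j k ^ 2 < M ^ 2 := by
  let i₀ : Fin N := ⟨0, hN⟩
  let e : Fin N → Fin N → Fin 4 → ℝ := fun i j k => if i = i₀ ∧ j = i₀ ∧ k = 1 then M / 2 else 0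
  have he_sq : ∑ i, ∑ j, ∑ k, e i j k ^ 2 = M ^ 2 / 4 := by
    norm_num [e, ite_and, div_pow]
  refine ⟨e, fun t ht i j => coneSign_mul_nonpos ?_, by rw [he_sq]; positivity,
    by rw [he_sq]; linarith [pow_pos hM 2]⟩
  simp only [e, Pi.smul_apply, smul_eq_mul, mul_ite, mul_zero, Fin.reduceEq, zero_ne_one,
    and_false, and_true, ↓reduceIte, le_refl, true_and]
  split_ifs <;> positivity

/-- **Failure of local strong convexity of the dual function in the first-order MFG
example.**
Let `K = ℝ₊ × ℝ₋ × ℝ₊ × ℝ₋ ⊆ ℝ⁴` with Euclidean projection `P_K` (given explicitly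
componentwise), `c_{ij} ∈ ℝ`, and
`φ(θ, v) = Σ_{i,j} exp(θ_{ij} + ‖P_K v_{ij}‖²/2 + c_{ij})`.
Then `φ` is convex and differentiable; for every `θ` and every `v` with
`v_{ij} ∈ ℝ₋ × ℝ₊ × ℝ₋ × ℝ₊` for all `i,j` (so `P_K v_{ij} = 0`) one has
`∇φ(θ, v) = ∇φ(θ, 0)` (stated via Fréchet derivatives), hence
`⟪∇φ(θ,v) − ∇φ(θ,0), (θ,v) − (θ,0)⟫ = 0`; consequently, for all `M > 0` and `μ > 0`,
`φ` is not `μ`-strongly convex on the (Euclidean) open ball of radius `M` centered at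
`(θ, 0)`, i.e. `φ − (μ/2)‖·‖²` is not convex there. -/
theorem stmt18 (N : ℕ) (hN : 1 ≤ N) (c : Fin N → Fin N → ℝ)
    (pK : (Fin 4 → ℝ) → (Fin 4 → ℝ))
    (hpK : ∀ w : Fin 4 → ℝ,
      pK w = fun i : Fin 4 => if i = 0 ∨ i = 2 then max (w i) 0 else min (w i) 0)
    (φ : ((Fin N → Fin N → ℝ) × (Fin N → Fin N → Fin 4 → ℝ)) → ℝ)
    (hφ : ∀ (θ : Fin N → Fin N → ℝ) (v : Fin N → Fin N → Fin 4 → ℝ),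
      φ (θ, v) = ∑ i : Fin N, ∑ j : Fin N,
        Real.exp (θ i j + (∑ k : Fin 4, pK (v i j) k ^ 2) / 2 + c i j)) :
    ConvexOn ℝ Set.univ φ ∧ Differentiable ℝ φ ∧
    ∀ (θ : Fin N → Fin N → ℝ) (v : Fin N → Fin N → Fin 4 → ℝ),
      (∀ i j, v i j 0 ≤ 0 ∧ 0 ≤ v i j 1 ∧ v i j 2 ≤ 0 ∧ 0 ≤ v i j 3) →
      (∀ i j, pK (v i j) = 0) ∧
      fderiv ℝ φ (θ, v) = fderiv ℝ φ (θ, 0) ∧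
      (fderiv ℝ φ (θ, v) - fderiv ℝ φ (θ, 0)) ((θ, v) - (θ, 0)) = 0 ∧
      ∀ M μ : ℝ, 0 < M → 0 < μ →
        ¬ ConvexOn ℝ
            {p : (Fin N → Fin N → ℝ) × (Fin N → Fin N → Fin 4 → ℝ) |
              (∑ i : Fin N, ∑ j : Fin N, (p.1 i j - θ i j) ^ 2) +
                (∑ i : Fin N, ∑ j : Fin N, ∑ k : Fin 4, p.2 i j k ^ 2) < M ^ 2}
            (fun p => φ p - μ / 2 *
              ((∑ i : Fin N, ∑ j : Fin N, p.1 i j ^ 2) +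
                (∑ i : Fin N, ∑ j : Fin N, ∑ k : Fin 4, p.2 i j k ^ 2))) := by
  obtain rfl : pK = projK := funext hpK
  obtain rfl : φ = expSum c (halfSqNormProjOrthant coneSign) := by
    funext ⟨θ, v⟩
    simp only [hφ, expSum, halfSqNormProjOrthant, Finset.sum_div, projK_sq]
  refine ⟨convexOn_expSum c (convexOn_halfSqNormProjOrthant _),
    differentiable_expSum c fun w => (hasFDerivAt_halfSqNormProjOrthant _ w).differentiableAt,
    fun θ v hv => ?_⟩
  have hv_polar : ∀ i j k, coneSign k * v i j k ≤ 0 := fun i j => coneSign_mul_nonpos (hv i j)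
  have h0_polar : ∀ i j k, coneSign k * (0 : Fin N → Fin N → Fin 4 → ℝ) i j k ≤ 0 := by simp
  have hgrad_eq := (fderiv_expSum_halfSqNormProjOrthant_of_nonpos c θ hv_polar).trans
    (fderiv_expSum_halfSqNormProjOrthant_of_nonpos c θ h0_polar).symm
  refine ⟨fun i j => projK_eq_zero (hv_polar i j), hgrad_eq,
    by rw [hgrad_eq, sub_self]; rfl, fun M μ hM hμ => ?_⟩
  obtain ⟨e, he_polar, he_pos, he_lt⟩ := exists_small_polarK_direction hN hM
  have hflat (t : ℝ) (ht : 0 ≤ t) :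
      expSum c (halfSqNormProjOrthant coneSign) (θ, t • e) =
        expSum c (halfSqNormProjOrthant coneSign) (θ, 0) :=
    (expSum_halfSqNormProjOrthant_of_nonpos c θ (he_polar t ht)).trans
      (expSum_halfSqNormProjOrthant_of_nonpos c θ h0_polar).symm
  exact not_convexOn_sub_sumSq_of_flat hμ he_pos (by simpa using pow_pos hM 2)
    (by simpa using he_lt) (hflat _ (by norm_num)) (by simpa using hflat 1 zero_le_one)
end
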